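/- arXiv:2205.12051 — 9 statements merged into one kernel-verified Lean document; each statement's English description precedes it below -/
import Mathlib

section
/- Let X be a set and (f_i) a sequence of functions from X to [0,1]. Suppose there exist a natural number N and a set E ⊆ {1,...,N} such that for every choice of indices i_1 < i_2 < ... < i_N and all real numbers r < s, there is no x ∈ X with f_{i_j}(x) ≤ r for all j ∈ E and f_{i_j}(x) ≥ s for all j ∈ {1,...,N} \ E. Then for all x ∈ X, the sum ∑_{i=1}^∞ |f_i(x) − f_{i+1}(x)| ≤ 2N − 2. -/
/-!
Fix a point `x` and write `a i = f i x`. Call `i` a crossing of the level `t` if `t` lies in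
`Ι (a i) (a (i + 1))`, i.e. the side of `t` on which the sequence lies changes from `i` to `i + 1`.
If some level `t` had `2N - 1` crossings, the sequence would contain `2N` increasing indices
alternating between `a < t` and `a ≥ t`; such an alternating run contains every below/above
pattern of length `N`, in particular the one given by `E`, contradicting the hypothesis. So every
level is crossed at most `2N - 2` times, and integrating the number of crossings over `t ∈ [0, 1]`
recovers the total variation `∑ |a i - a (i + 1)|` (Banach's indicatrix).
-/

open Filter Topology

open Set MeasureTheory
open scoped Finset Interval ENNReal

theorem exists_lt_forall_le_of_forall_lt {α ι : Type*} [LinearOrder α] [TopologicalSpace α]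
    [OrderTopology α] [DenselyOrdered α] [NoMinOrder α] [Finite ι] {g : ι → α} {t : α}
    (h : ∀ j, g j < t) : ∃ r < t, ∀ j, g j ≤ r :=
  (eventually_mem_nhdsWithin.and <| eventually_all.2 fun j =>
    mem_of_superset (Ioo_mem_nhdsLT (h j)) fun _ hr => hr.1.le).exists

theorem exists_strictMono_alternating (p : ℕ → Bool) (n m : ℕ)
    (hm : m ≤ Nat.count (fun i => p i ≠ p (i + 1)) n + 1) :
    ∃ q : Fin m → ℕ, StrictMono q ∧ ∀ k, p (q k) = (p 0 ^^ (k : ℕ).bodd) := by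
  induction n generalizing p m with
  | zero =>
    have hm1 : m ≤ 1 := by simpa using hm
    refine ⟨fun _ => 0, fun k l hkl => by omega, fun k => ?_⟩
    have hk : (k : ℕ) = 0 := by omega
    simp [hk]
  | succ n ih =>
    rw [Nat.count_succ', zero_add] at hm
    by_cases h01 : p 0 = p 1
    · obtain ⟨q, hq, halt⟩ := ih (fun k => p (k + 1)) m (by simpa [h01] using hm)
      exact ⟨fun k => q k + 1, hq.add_const 1, fun k => by simp [halt, h01]⟩
    · cases m with
      | zero => exact ⟨Fin.elim0, fun k => k.elim0, fun k => k.elim0⟩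
      | succ m =>
        obtain ⟨q, hq, halt⟩ := ih (fun k => p (k + 1)) m (by simp [h01] at hm; omega)
        refine ⟨Fin.cons 0 fun k => q k + 1,
          Fin.strictMono_cons.2 ⟨fun _ => Nat.succ_pos _, hq.add_const 1⟩,
          Fin.cases (by simp) fun k => ?_⟩
        have h1 : p 1 = !p 0 := Bool.eq_not_of_ne (Ne.symm h01)
        simp [halt, h1, Nat.bodd_succ]

theorem exists_strictMono_xor_bodd_eq {N : ℕ} (b : Bool) (w : Fin N → Bool) :
    ∃ e : Fin N → Fin (2 * N), StrictMono e ∧ ∀ j, (b ^^ (e j : ℕ).bodd) = w j := by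
  refine ⟨fun j => ⟨2 * j + (b ^^ w j).toNat, ?_⟩, fun j l hjl => ?_, fun j => ?_⟩
  · have := (b ^^ w j).toNat_le; omega
  · have := (b ^^ w j).toNat_le
    simp only [Fin.mk_lt_mk]
    omega
  · rcases b <;> rcases h : w j <;> simp [h]

open Classical in
theorem sum_measure_le_mul_measure_biUnion {ι α : Type*} [MeasurableSpace α] (μ : Measure α)
    (s : Finset ι) {A : ι → Set α} (hA : ∀ i ∈ s, MeasurableSet (A i)) {c : ℕ}
    (hc : ∀ x, #{i ∈ s | x ∈ A i} ≤ c) :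
    ∑ i ∈ s, μ (A i) ≤ c * μ (⋃ i ∈ s, A i) := by
  calc ∑ i ∈ s, μ (A i)
      = ∑ i ∈ s, ∫⁻ x in ⋃ i ∈ s, A i, (A i).indicator 1 x ∂μ := by
        refine Finset.sum_congr rfl fun i hi => ?_
        rw [lintegral_indicator_one (hA i hi), Measure.restrict_apply (hA i hi),
          inter_eq_left.2 (Finset.subset_set_biUnion_of_mem hi)]
    _ = ∫⁻ x in ⋃ i ∈ s, A i, (#{i ∈ s | x ∈ A i} : ℝ≥0∞) ∂μ := by
        rw [← lintegral_finsetSum _ fun i hi => measurable_one.indicator (hA i hi)]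
        simp [indicator_apply, Finset.sum_boole]
    _ ≤ ∫⁻ _ in ⋃ i ∈ s, A i, (c : ℝ≥0∞) ∂μ := lintegral_mono fun x => Nat.cast_le.2 (hc x)
    _ = c * μ (⋃ i ∈ s, A i) := setLIntegral_const _ _

open Classical in
theorem sum_range_abs_sub_le_of_count_mem_uIoc_le {a : ℕ → ℝ} {l u : ℝ}
    (ha : ∀ i, a i ∈ Icc l u) {c n : ℕ}
    (hc : ∀ t, Nat.count (fun i => t ∈ Ι (a i) (a (i + 1))) n ≤ c) :
    ∑ i ∈ Finset.range n, |a i - a (i + 1)| ≤ c * (u - l) := by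
  have hlu : l ≤ u := (ha 0).1.trans (ha 0).2
  have hsub : ⋃ i ∈ Finset.range n, Ι (a i) (a (i + 1)) ⊆ Ioc l u :=
    iUnion₂_subset fun i _ =>
      Ioc_subset_Ioc (le_min (ha i).1 (ha (i + 1)).1) (max_le (ha i).2 (ha (i + 1)).2)
  have key := sum_measure_le_mul_measure_biUnion volume (Finset.range n)
    (fun i _ => measurableSet_uIoc) fun t =>
      (Nat.count_eq_card_filter_range _ n).symm.trans_le (hc t)
  rw [← ENNReal.ofReal_le_ofReal_iff (by positivity),
    ENNReal.ofReal_sum_of_nonneg fun _ _ => abs_nonneg _,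
    ENNReal.ofReal_mul (Nat.cast_nonneg _), ENNReal.ofReal_natCast, ← Real.volume_Ioc]
  calc ∑ i ∈ Finset.range n, ENNReal.ofReal |a i - a (i + 1)|
      = ∑ i ∈ Finset.range n, volume (Ι (a i) (a (i + 1))) := by
        simp [Real.volume_uIoc, abs_sub_comm]
    _ ≤ c * volume (⋃ i ∈ Finset.range n, Ι (a i) (a (i + 1))) := key
    _ ≤ c * volume (Ioc l u) := by gcongr

open Classical in
theorem tsum_abs_sub_le_of_count_mem_uIoc_le {a : ℕ → ℝ} {l u : ℝ}
    (ha : ∀ i, a i ∈ Icc l u) {c : ℕ}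
    (hc : ∀ t n, Nat.count (fun i => t ∈ Ι (a i) (a (i + 1))) n ≤ c) :
    ∑' i, |a i - a (i + 1)| ≤ c * (u - l) :=
  Real.tsum_le_of_sum_range_le (fun _ => abs_nonneg _) fun n =>
    sum_range_abs_sub_le_of_count_mem_uIoc_le ha (hc · n)

open Classical in
theorem exists_strictMono_pattern_of_le_count {a : ℕ → ℝ} {N : ℕ} (P : Fin N → Prop) {t : ℝ}
    {n : ℕ} (h : 2 * N ≤ Nat.count (fun i => t ∈ Ι (a i) (a (i + 1))) n + 1) :
    ∃ i : Fin N → ℕ, StrictMono i ∧ ∃ r < t,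
      (∀ j, P j → a (i j) ≤ r) ∧ ∀ j, ¬ P j → t ≤ a (i j) := by
  set p : ℕ → Bool := fun k => decide (t ≤ a k)
  have hcross : ∀ i, t ∈ Ι (a i) (a (i + 1)) ↔ p i ≠ p (i + 1) := by
    intro i
    simp only [p, mem_uIoc, ne_eq, decide_eq_decide]
    grind
  obtain ⟨q, hq, halt⟩ :=
    exists_strictMono_alternating p n (2 * N) (by simpa only [hcross] using h)
  obtain ⟨e, he, hpat⟩ := exists_strictMono_xor_bodd_eq (p 0) fun j => !decide (P j)
  have hside : ∀ j, t ≤ a (q (e j)) ↔ ¬ P j := fun j => by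
    simpa only [p, hpat j, ← decide_not, decide_eq_decide] using halt (e j)
  obtain ⟨r, hrt, hr⟩ :=
    exists_lt_forall_le_of_forall_lt (g := fun j : {j // P j} => a (q (e j)))
      fun j => not_le.1 fun hj => (hside j).1 hj j.2
  exact ⟨q ∘ e, hq.comp he, r, hrt, fun j hj => hr ⟨j, hj⟩, fun j hj => (hside j).2 hj⟩

theorem stmt_0_general {X : Type*} (f : ℕ → X → ℝ)
    (hf : ∀ i x, f i x ∈ Set.Icc (0 : ℝ) 1)
    (N : ℕ) (E : Finset ℕ)
    (hblock : ∀ i : Fin N → ℕ, StrictMono i → ∀ r s : ℝ, r < s →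
      ¬ ∃ x : X, (∀ j : Fin N, (j : ℕ) ∈ E → f (i j) x ≤ r) ∧
        (∀ j : Fin N, (j : ℕ) ∉ E → s ≤ f (i j) x)) :
    ∀ x : X, ∑' i : ℕ, |f i x - f (i + 1) x| ≤ 2 * N - 2 := by
  classical
  intro x
  have hcount : ∀ t n, Nat.count (fun i => t ∈ Ι (f i x) (f (i + 1) x)) n + 2 ≤ 2 * N := by
    intro t n
    by_contra! h
    obtain ⟨i, hi, r, hrt, hlow, hhigh⟩ :=
      exists_strictMono_pattern_of_le_count (a := (f · x)) (fun j : Fin N => (j : ℕ) ∈ E)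
        (t := t) (n := n) (by omega)
    exact hblock i hi r t hrt ⟨x, hlow, hhigh⟩
  -- already at `n = 0` this forces `N ≥ 1`, so casting the truncated `2 * N - 2` is exact
  have hN : 1 ≤ N := by simpa using hcount 0 0
  calc ∑' i, |f i x - f (i + 1) x| ≤ ((2 * N - 2 : ℕ) : ℝ) * (1 - 0) :=
        tsum_abs_sub_le_of_count_mem_uIoc_le (hf · x) fun t n => by
          have := hcount t n
          omega
    _ = 2 * N - 2 := by
        rw [Nat.cast_sub (by omega)]
        push_cast
        ring

theorem stmt_0 {X : Type*} (f : ℕ → X → ℝ)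
    (hf : ∀ i x, f i x ∈ Set.Icc (0 : ℝ) 1)
    (N : ℕ) (E : Finset ℕ) (hE : E ⊆ Finset.range N)
    (hblock : ∀ i : Fin N → ℕ, StrictMono i → ∀ r s : ℝ, r < s →
      ¬ ∃ x : X, (∀ j : Fin N, (j : ℕ) ∈ E → f (i j) x ≤ r) ∧
        (∀ j : Fin N, (j : ℕ) ∉ E → s ≤ f (i j) x)) :
    ∀ x : X, ∑' i : ℕ, |f i x - f (i + 1) x| ≤ 2 * N - 2 :=
  stmt_0_general f hf N E hblock
end

section
/- Let X be a set and (f_i) a nondecreasing sequence of [0,1]-valued functions on X (f_i(x) ≤ f_{i+1}(x) for all i, x). Suppose there exist ε > 0 and a sequence (b_i) of points of X such that f_i(b_j) + ε ≤ f_j(b_i) for all i < j. Then for every k ∈ ℕ and every choice of real scalars c_1,...,c_k, one has ‖∑_{i=1}^k c_i f_i‖_∞ ≤ ‖∑_{i=1}^k c_i s_i‖_∞, where (s_i) is the summing basis of c_0, i.e., ‖∑_{i=1}^k c_i s_i‖_∞ = max_{1≤j≤k} |c_j + c_{j+1} + ... + c_k|. -/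
open Filter Topology

theorem stmt_4 {X : Type*} (f : ℕ → X → ℝ)
    (hf : ∀ i x, f i x ∈ Set.Icc (0 : ℝ) 1)
    (hmono : ∀ i x, f i x ≤ f (i + 1) x)
    (ε : ℝ) (hε : 0 < ε) (b : ℕ → X)
    (hop : ∀ i j : ℕ, i < j → f i (b j) + ε ≤ f j (b i))
    (k : ℕ) (hk : 0 < k) (c : ℕ → ℝ) :
    ∀ x : X, |∑ i ∈ Finset.range k, c i * f i x| ≤
      (Finset.range k).sup' (Finset.nonempty_range_iff.2 hk.ne')
        (fun j => |∑ i ∈ Finset.Ico j k, c i|) := by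
  intro x
  set hne := Finset.nonempty_range_iff.2 hk.ne'
  set M := (Finset.range k).sup' hne (fun j => |∑ i ∈ Finset.Ico j k, c i|) with hM
  -- F i : auxiliary, F 0 = 0, F (i+1) = f i x
  set F : ℕ → ℝ := fun i => Nat.rec 0 (fun j _ => f j x) i with hF
  have hF0 : F 0 = 0 := rfl
  have hFs : ∀ i, F (i + 1) = f i x := fun i => rfl
  have hd : ∀ i, 0 ≤ F (i + 1) - F i := by
    intro i
    cases i with
    | zero => simpa [hFs, hF0] using (hf 0 x).1
    | succ j => simpa [hFs] using hmono j x
  have hMnonneg : 0 ≤ M := by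
    exact le_trans (abs_nonneg _) (Finset.le_sup' (fun j => |∑ i ∈ Finset.Ico j k, c i|) (Finset.mem_range.2 hk))
  have hMle : ∀ i ∈ Finset.range k, |∑ j ∈ Finset.Ico i k, c j| ≤ M :=
    fun i hi => Finset.le_sup' (fun j => |∑ i ∈ Finset.Ico j k, c i|) hi
  -- key identity
  have key : ∑ i ∈ Finset.range k, c i * f i x
      = ∑ i ∈ Finset.range k, (∑ j ∈ Finset.Ico i k, c j) * (F (i + 1) - F i) := by
    have : ∑ i ∈ Finset.range k, (∑ j ∈ Finset.Ico i k, c j) * (F (i + 1) - F i)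
        = ∑ i ∈ Finset.Ico 0 k, ∑ j ∈ Finset.Ico i k, c j * (F (i + 1) - F i) := by
      rw [Finset.range_eq_Ico]
      exact Finset.sum_congr rfl fun i _ => Finset.sum_mul ..
    rw [this, Finset.sum_Ico_Ico_comm, ← Finset.range_eq_Ico]
    refine Finset.sum_congr rfl fun j _ => ?_
    rw [← Finset.range_eq_Ico, ← Finset.mul_sum, Finset.sum_range_sub F, hF0, hFs, sub_zero]
  rw [key]
  calc |∑ i ∈ Finset.range k, (∑ j ∈ Finset.Ico i k, c j) * (F (i + 1) - F i)|
      ≤ ∑ i ∈ Finset.range k, |(∑ j ∈ Finset.Ico i k, c j) * (F (i + 1) - F i)| :=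
        Finset.abs_sum_le_sum_abs _ _
    _ ≤ ∑ i ∈ Finset.range k, M * (F (i + 1) - F i) := by
        refine Finset.sum_le_sum fun i hi => ?_
        rw [abs_mul, abs_of_nonneg (hd i)]
        exact mul_le_mul_of_nonneg_right (hMle i hi) (hd i)
    _ = M * F k := by rw [← Finset.mul_sum, Finset.sum_range_sub F, hF0, sub_zero]
    _ ≤ M * 1 := by
        refine mul_le_mul_of_nonneg_left ?_ hMnonneg
        obtain ⟨m, rfl⟩ := Nat.exists_eq_succ_of_ne_zero hk.ne'
        simpa [hFs] using (hf m x).2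
    _ = M := mul_one M
end

section
/- Let X be a set, r < s real numbers, and (f_i) a sequence of functions X → [0,1] with the independence property with constants r, s: for every pair of disjoint finite sets E, F ⊆ ℕ there exists x ∈ X with f_i(x) ≤ r for all i ∈ E and f_i(x) ≥ s for all i ∈ F. Then for every k and all real scalars c_1,...,c_k, one has ‖∑_{i=1}^k c_i f_i‖_∞ ≥ ((s−r)/2) ∑_{i=1}^k |c_i|. In particular, (f_i) is equivalent in sup-norm to the unit vector basis of ℓ^1. -/
open Filter Topology

theorem stmt_5 {X : Type*} (f : ℕ → X → ℝ)
    (hf : ∀ i x, f i x ∈ Set.Icc (0 : ℝ) 1)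
    (r s : ℝ) (hrs : r < s)
    (hIP : ∀ E F : Finset ℕ, Disjoint E F →
      ∃ x : X, (∀ i ∈ E, f i x ≤ r) ∧ (∀ i ∈ F, s ≤ f i x)) :
    ∀ k : ℕ, ∀ c : ℕ → ℝ,
      ((s - r) / 2) * ∑ i ∈ Finset.range k, |c i| ≤
        ⨆ x : X, |∑ i ∈ Finset.range k, c i * f i x| ∧
      (⨆ x : X, |∑ i ∈ Finset.range k, c i * f i x|) ≤
        ∑ i ∈ Finset.range k, |c i| := by
  intro k c
  -- X is nonempty
  obtain ⟨x₀, -, -⟩ := hIP ∅ ∅ (Finset.disjoint_empty_left _)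
  haveI : Nonempty X := ⟨x₀⟩
  set S : X → ℝ := fun x => |∑ i ∈ Finset.range k, c i * f i x| with hS
  have hub : ∀ x : X, S x ≤ ∑ i ∈ Finset.range k, |c i| := by
    intro x
    calc S x ≤ ∑ i ∈ Finset.range k, |c i * f i x| := Finset.abs_sum_le_sum_abs _ _
      _ ≤ ∑ i ∈ Finset.range k, |c i| := by
          apply Finset.sum_le_sum
          intro i _
          rw [abs_mul]
          obtain ⟨h0, h1⟩ := hf i x
          calc |c i| * |f i x| ≤ |c i| * 1 := by
                apply mul_le_mul_of_nonneg_left _ (abs_nonneg _)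
                rw [abs_le]; exact ⟨by linarith, h1⟩
            _ = |c i| := mul_one _
  have hbdd : BddAbove (Set.range S) := by
    refine ⟨∑ i ∈ Finset.range k, |c i|, ?_⟩
    rintro _ ⟨x, rfl⟩; exact hub x
  have hupper : (⨆ x : X, S x) ≤ ∑ i ∈ Finset.range k, |c i| :=
    ciSup_le hub
  refine ⟨?_, hupper⟩
  -- lower bound
  set E := (Finset.range k).filter (fun i => c i < 0) with hE
  set F := (Finset.range k).filter (fun i => 0 ≤ c i) with hF
  have hdisj : Disjoint E F := by
    rw [Finset.disjoint_left]
    intro i hiE hiF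
    simp only [hE, hF, Finset.mem_filter] at hiE hiF
    linarith [hiE.2, hiF.2]
  obtain ⟨x, hxE, hxF⟩ := hIP E F hdisj
  obtain ⟨y, hyF, hyE⟩ := hIP F E hdisj.symm
  have key : (s - r) * ∑ i ∈ Finset.range k, |c i| ≤
      ∑ i ∈ Finset.range k, c i * f i x - ∑ i ∈ Finset.range k, c i * f i y := by
    rw [← Finset.sum_sub_distrib, Finset.mul_sum]
    apply Finset.sum_le_sum
    intro i hi
    have h1 : c i * f i x - c i * f i y = c i * (f i x - f i y) := by ring
    rw [h1]
    rcases lt_or_ge (c i) 0 with hc | hc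
    · have hiE : i ∈ E := by simp [hE, Finset.mem_filter, hi, hc]
      have hx : f i x ≤ r := hxE i hiE
      have hy : s ≤ f i y := hyE i hiE
      have : f i x - f i y ≤ r - s := by linarith
      have habs : |c i| = -c i := abs_of_neg hc
      nlinarith
    · have hiF : i ∈ F := by simp [hF, Finset.mem_filter, hi, hc]
      have hx : s ≤ f i x := hxF i hiF
      have hy : f i y ≤ r := hyF i hiF
      have : s - r ≤ f i x - f i y := by linarith
      have habs : |c i| = c i := abs_of_nonneg hc
      nlinarith
  have hx' : S x ≤ ⨆ x : X, S x := le_ciSup hbdd x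
  have hy' : S y ≤ ⨆ x : X, S x := le_ciSup hbdd y
  have h1 : ∑ i ∈ Finset.range k, c i * f i x ≤ S x := le_abs_self _
  have h2 : -∑ i ∈ Finset.range k, c i * f i y ≤ S y := neg_le_abs _
  linarith
end

section
/- Let X be a set, r < s reals, and (f_i) a sequence of functions X → [0,1] such that for all k and all disjoint E, F ⊆ {1,...,k} there is x ∈ X with f_i(x) ≤ r for i ∈ E and f_i(x) ≥ s for i ∈ F. Then the functions {f_i} are linearly independent and span an isometric-up-to-constants copy of ℓ^1 in the bounded functions on X. -/
open Filter Topology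

theorem stmt_6 {X : Type*} (f : ℕ → X → ℝ)
    (hf : ∀ i x, f i x ∈ Set.Icc (0 : ℝ) 1)
    (r s : ℝ) (hrs : r < s)
    (hIP : ∀ E F : Finset ℕ, Disjoint E F →
      ∃ x : X, (∀ i ∈ E, f i x ≤ r) ∧ (∀ i ∈ F, s ≤ f i x)) :
    LinearIndependent ℝ f ∧
      ∃ a b : ℝ, 0 < a ∧ a ≤ b ∧
        ∀ (k : ℕ) (c : ℕ → ℝ),
          a * ∑ i ∈ Finset.range k, |c i| ≤
              (⨆ x : X, |∑ i ∈ Finset.range k, c i * f i x|) ∧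
            (⨆ x : X, |∑ i ∈ Finset.range k, c i * f i x|) ≤
              b * ∑ i ∈ Finset.range k, |c i| := by
  obtain ⟨x0, -, -⟩ := hIP ∅ ∅ (Finset.disjoint_empty_left _)
  have hX : Nonempty X := ⟨x0⟩
  have hr0 : 0 ≤ r := by
    obtain ⟨x, h1, -⟩ := hIP {0} ∅ (Finset.disjoint_empty_right _)
    have := (hf 0 x).1
    have h2 := h1 0 (Finset.mem_singleton_self 0)
    linarith
  have hs1 : s ≤ 1 := by
    obtain ⟨x, -, h1⟩ := hIP ∅ {0} (Finset.disjoint_empty_left _)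
    have := (hf 0 x).2
    have h2 := h1 0 (Finset.mem_singleton_self 0)
    linarith
  have hbdd : ∀ (k : ℕ) (c : ℕ → ℝ) (x : X),
      |∑ i ∈ Finset.range k, c i * f i x| ≤ ∑ i ∈ Finset.range k, |c i| := by
    intro k c x
    calc |∑ i ∈ Finset.range k, c i * f i x|
        ≤ ∑ i ∈ Finset.range k, |c i * f i x| := Finset.abs_sum_le_sum_abs _ _
      _ ≤ ∑ i ∈ Finset.range k, |c i| := by
          apply Finset.sum_le_sum
          intro i _
          rw [abs_mul]
          have h01 := hf i x
          have hfa : |f i x| ≤ 1 := abs_le.mpr ⟨by linarith [h01.1], h01.2⟩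
          nlinarith [abs_nonneg (c i)]
  have hBdd : ∀ (k : ℕ) (c : ℕ → ℝ),
      BddAbove (Set.range fun x : X => |∑ i ∈ Finset.range k, c i * f i x|) :=
    fun k c => ⟨∑ i ∈ Finset.range k, |c i|, by rintro y ⟨x, rfl⟩; exact hbdd k c x⟩
  have hlow : ∀ (k : ℕ) (c : ℕ → ℝ),
      (s - r) / 2 * ∑ i ∈ Finset.range k, |c i| ≤
        ⨆ x : X, |∑ i ∈ Finset.range k, c i * f i x| := by
    intro k c
    set E := (Finset.range k).filter (fun i => c i < 0) with hE
    set F := (Finset.range k).filter (fun i => 0 ≤ c i) with hF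
    have hEF : Disjoint E F := by
      rw [Finset.disjoint_left]
      intro i hi hi'
      rw [hE, Finset.mem_filter] at hi
      rw [hF, Finset.mem_filter] at hi'
      linarith [hi.2, hi'.2]
    obtain ⟨xp, hpE, hpF⟩ := hIP E F hEF
    obtain ⟨xm, hmF, hmE⟩ := hIP F E hEF.symm
    have key : (s - r) * ∑ i ∈ Finset.range k, |c i| ≤
        (∑ i ∈ Finset.range k, c i * f i xp) - (∑ i ∈ Finset.range k, c i * f i xm) := by
      rw [← Finset.sum_sub_distrib, Finset.mul_sum]
      apply Finset.sum_le_sum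
      intro i hi
      rcases le_or_gt 0 (c i) with h | h
      · have hiF : i ∈ F := by rw [hF, Finset.mem_filter]; exact ⟨hi, h⟩
        have h1 := hpF i hiF
        have h2 := hmF i hiF
        rw [abs_of_nonneg h]
        nlinarith
      · have hiE : i ∈ E := by rw [hE, Finset.mem_filter]; exact ⟨hi, h⟩
        have h1 := hpE i hiE
        have h2 := hmE i hiE
        rw [abs_of_neg h]
        nlinarith
    have h1 : |∑ i ∈ Finset.range k, c i * f i xp| ≤
        ⨆ x : X, |∑ i ∈ Finset.range k, c i * f i x| :=
      le_ciSup (hBdd k c) xp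
    have h2 : |∑ i ∈ Finset.range k, c i * f i xm| ≤
        ⨆ x : X, |∑ i ∈ Finset.range k, c i * f i x| :=
      le_ciSup (hBdd k c) xm
    have ha1 := le_abs_self (∑ i ∈ Finset.range k, c i * f i xp)
    have ha2 := neg_abs_le (∑ i ∈ Finset.range k, c i * f i xm)
    linarith
  have hineq : ∀ (k : ℕ) (c : ℕ → ℝ),
      (s - r) / 2 * ∑ i ∈ Finset.range k, |c i| ≤
          (⨆ x : X, |∑ i ∈ Finset.range k, c i * f i x|) ∧
        (⨆ x : X, |∑ i ∈ Finset.range k, c i * f i x|) ≤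
          1 * ∑ i ∈ Finset.range k, |c i| := by
    intro k c
    refine ⟨hlow k c, ?_⟩
    rw [one_mul]
    exact ciSup_le (hbdd k c)
  refine ⟨?_, (s - r) / 2, 1, by linarith, by linarith, hineq⟩
  rw [linearIndependent_iff']
  intro t g hsum i hit
  set k := t.sup id + 1 with hk
  have hsub : t ⊆ Finset.range k := by
    intro j hj
    rw [Finset.mem_range, hk]
    exact Nat.lt_succ_of_le (Finset.le_sup (f := id) hj)
  set c : ℕ → ℝ := fun j => if j ∈ t then g j else 0 with hc
  have hzero : ∀ x : X, ∑ j ∈ Finset.range k, c j * f j x = 0 := by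
    intro x
    rw [← Finset.sum_subset hsub (fun j _ hj => by simp [hc, hj])]
    have := congrFun hsum x
    simpa [hc, Finset.sum_apply] using this
  have hsup0 : (⨆ x : X, |∑ j ∈ Finset.range k, c j * f j x|) = 0 := by
    have : (fun x : X => |∑ j ∈ Finset.range k, c j * f j x|) = fun _ => 0 := by
      funext x; rw [hzero x, abs_zero]
    rw [this, ciSup_const]
  have hl := hlow k c
  rw [hsup0] at hl
  have hnn : ∀ j ∈ Finset.range k, 0 ≤ |c j| := fun j _ => abs_nonneg _
  have hsumnn : 0 ≤ ∑ j ∈ Finset.range k, |c j| := Finset.sum_nonneg hnn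
  have hsum0 : ∑ j ∈ Finset.range k, |c j| = 0 := by nlinarith
  have hci : |c i| = 0 :=
    (Finset.sum_eq_zero_iff_of_nonneg hnn).mp hsum0 i (hsub hit)
  have : c i = 0 := abs_eq_zero.mp hci
  simpa [hc, hit] using this
end

section
/- Let X be a compact Hausdorff topological space and A a subset of C(X) that is uniformly bounded. Suppose every function in the closure of A in the product topology on ℝ^X is continuous. Then for every pair of sequences (f_n) in A and (x_m) in X, if both iterated limits lim_n lim_m f_n(x_m) and lim_m lim_n f_n(x_m) exist, they are equal. -/
open Filter Topology

theorem stmt_7 {X : Type*} [TopologicalSpace X] [CompactSpace X] [T2Space X]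
    (A : Set C(X, ℝ)) (M : ℝ) (hbdd : ∀ g ∈ A, ∀ x, |g x| ≤ M)
    (hclos : ∀ h : X → ℝ, h ∈ closure ((fun g : C(X, ℝ) => (g : X → ℝ)) '' A) →
      Continuous h)
    (f : ℕ → C(X, ℝ)) (hfA : ∀ n, f n ∈ A) (x : ℕ → X)
    (a : ℕ → ℝ) (b : ℕ → ℝ) (L₁ L₂ : ℝ)
    (ha : ∀ n, Tendsto (fun m => f n (x m)) atTop (𝓝 (a n)))
    (hL₁ : Tendsto a atTop (𝓝 L₁))
    (hb : ∀ m, Tendsto (fun n => f n (x m)) atTop (𝓝 (b m)))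
    (hL₂ : Tendsto b atTop (𝓝 L₂)) :
    L₁ = L₂ := by
  haveI : Nonempty X := ⟨x 0⟩
  set 𝒰 : Ultrafilter ℕ := Ultrafilter.of atTop with h𝒰def
  have h𝒰 : (𝒰 : Filter ℕ) ≤ atTop := Ultrafilter.of_le atTop
  -- cluster point of (x m)
  obtain ⟨x₀, -, hx₀⟩ := isCompact_univ.ultrafilter_le_nhds (𝒰.map x)
    (by simp [Filter.le_principal_iff])
  have hx₀' : Tendsto x 𝒰 (𝓝 x₀) := hx₀
  -- pointwise ultrafilter limit of f
  have hcoord : ∀ y : X, ∃ c : ℝ, Tendsto (fun n => f n y) 𝒰 (𝓝 c) := by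
    intro y
    obtain ⟨c, -, hc⟩ := (isCompact_Icc (a := -M) (b := M)).ultrafilter_le_nhds
      (𝒰.map fun n => f n y)
      (Filter.le_principal_iff.mpr (Filter.eventually_map.mpr
        (Eventually.of_forall fun n => abs_le.mp (hbdd (f n) (hfA n) y))))
    exact ⟨c, hc⟩
  choose h hh using hcoord
  have htend : Tendsto (fun n => ((f n : X → ℝ))) 𝒰 (𝓝 h) :=
    tendsto_pi_nhds.mpr hh
  have hmem : h ∈ closure ((fun g : C(X, ℝ) => (g : X → ℝ)) '' A) :=
    mem_closure_of_tendsto htend (Eventually.of_forall fun n => ⟨f n, hfA n, rfl⟩)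
  have hcont : Continuous h := hclos h hmem
  -- a n = f n x₀
  have haeq : ∀ n, a n = f n x₀ := fun n =>
    tendsto_nhds_unique ((ha n).mono_left h𝒰) (((f n).continuous.tendsto x₀).comp hx₀')
  -- b m = h (x m)
  have hbeq : ∀ m, b m = h (x m) := fun m =>
    tendsto_nhds_unique ((hb m).mono_left h𝒰) (hh (x m))
  -- L₁ = h x₀
  have hL₁' : L₁ = h x₀ := by
    have t1 : Tendsto (fun n => f n x₀) 𝒰 (𝓝 L₁) := by
      have := hL₁.mono_left h𝒰
      simpa [funext haeq] using this
    exact tendsto_nhds_unique t1 (hh x₀)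
  have hL₂' : L₂ = h x₀ := by
    have t1 : Tendsto (fun m => h (x m)) 𝒰 (𝓝 L₂) := by
      have := hL₂.mono_left h𝒰
      simpa [funext hbeq] using this
    exact tendsto_nhds_unique t1 ((hcont.tendsto x₀).comp hx₀')
  rw [hL₁', hL₂']
end

section
/- Let X be a compact Hausdorff space and A ⊆ C(X) uniformly bounded. Suppose there exist sequences (f_n) in A, (x_m) in X, and reals r < s such that f_n(x_m) ≤ r for m > n and f_n(x_m) ≥ s for m ≤ n. Then some function in the pointwise closure of A in ℝ^X is not continuous. -/
open Filter Topology

/-- A cluster point of a filter lies in any closed set belonging to the filter. -/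
lemma clusterPt_mem_of_isClosed {Y : Type*} [TopologicalSpace Y] {a : Y} {F : Filter Y}
    {C : Set Y} (h : ClusterPt a F) (hC : IsClosed C) (hCF : C ∈ F) : a ∈ C := by
  have : ClusterPt a (𝓟 C) := h.mono (le_principal_iff.2 hCF)
  simpa [hC.closure_eq] using mem_closure_iff_clusterPt.2 this

theorem stmt_8 {X : Type*} [TopologicalSpace X] [CompactSpace X] [T2Space X]
    (A : Set C(X, ℝ)) (M : ℝ) (hbdd : ∀ g ∈ A, ∀ x, |g x| ≤ M)
    (f : ℕ → C(X, ℝ)) (hfA : ∀ n, f n ∈ A) (x : ℕ → X)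
    (r s : ℝ) (hrs : r < s)
    (h₁ : ∀ n m : ℕ, n < m → f n (x m) ≤ r)
    (h₂ : ∀ n m : ℕ, m ≤ n → s ≤ f n (x m)) :
    ∃ g : X → ℝ, g ∈ closure ((fun g : C(X, ℝ) => (g : X → ℝ)) '' A) ∧
      ¬ Continuous g := by
  -- the sequence lives in a compact subset of ℝ^X (product of intervals)
  have hKcomp : IsCompact (Set.pi Set.univ (fun _ : X => Set.Icc (-M) M)) :=
    isCompact_univ_pi fun _ => isCompact_Icc
  have hle : Filter.map (fun n => (⇑(f n) : X → ℝ)) atTop ≤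
      𝓟 (Set.pi Set.univ (fun _ : X => Set.Icc (-M) M)) := by
    rw [le_principal_iff, Filter.mem_map]
    exact Filter.univ_mem' fun n => Set.mem_univ_pi.2 fun y => abs_le.1 (hbdd (f n) (hfA n) y)
  obtain ⟨g, -, hg⟩ :=
    hKcomp.exists_clusterPt (f := Filter.map (fun n => (⇑(f n) : X → ℝ)) atTop) hle
  refine ⟨g, ?_, ?_⟩
  · -- g is in the pointwise closure of the image of A
    refine mem_closure_iff_clusterPt.2 (hg.mono (le_principal_iff.2 (Filter.mem_map.2 ?_)))
    exact Filter.univ_mem' fun n => Set.mem_image_of_mem _ (hfA n)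
  · -- pointwise cluster values
    have hgM : MapClusterPt g atTop fun n => (⇑(f n) : X → ℝ) := hg
    have hev : ∀ y : X, MapClusterPt (g y) atTop fun n => f n y := fun y =>
      hgM.continuousAt_comp (f := fun h : X → ℝ => h y) (continuous_apply y).continuousAt
    -- g (x m) ≥ s for every m
    have hgs : ∀ m, s ≤ g (x m) := by
      intro m
      refine clusterPt_mem_of_isClosed (C := Set.Ici s) (hev (x m)).clusterPt isClosed_Ici ?_
      rw [Filter.mem_map]
      exact Filter.mem_of_superset (Filter.Ici_mem_atTop m) fun n hn => h₂ n m hn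
    -- a cluster point of the sequence x
    obtain ⟨x₀, hx₀⟩ := exists_clusterPt_of_compactSpace (Filter.map x atTop)
    have hx₀' : MapClusterPt x₀ atTop x := hx₀
    -- f n x₀ ≤ r for every n
    have hfn : ∀ n, f n x₀ ≤ r := by
      intro n
      have h1 : MapClusterPt (f n x₀) atTop fun m => f n (x m) :=
        hx₀'.continuousAt_comp (f n).continuous.continuousAt
      refine clusterPt_mem_of_isClosed (C := Set.Iic r) h1.clusterPt isClosed_Iic ?_
      rw [Filter.mem_map]
      exact Filter.mem_of_superset (Filter.Ici_mem_atTop (n + 1)) fun m hm => h₁ n m hm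
    -- g x₀ ≤ r
    have hgx : g x₀ ≤ r :=
      clusterPt_mem_of_isClosed (C := Set.Iic r) (hev x₀).clusterPt isClosed_Iic
        (Filter.mem_map.2 (Filter.univ_mem' hfn))
    -- but if g were continuous, g x₀ ≥ s
    intro hgc
    have h2 : MapClusterPt (g x₀) atTop fun m => g (x m) :=
      hx₀'.continuousAt_comp hgc.continuousAt
    have hs : s ≤ g x₀ :=
      clusterPt_mem_of_isClosed h2.clusterPt isClosed_Ici
        (Filter.mem_map.2 (Filter.univ_mem' hgs))
    exact absurd (hs.trans hgx) (not_le.2 hrs)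
end

section
/- Let X be a compact metric space. Define B_{1/2}(X) as the set of real-valued functions on X that are uniform limits of sequences of DBSC(X) functions. Then B_{1/2}(X) is a closed subspace of the bounded functions on X under the sup-norm, and every simple (finitely-valued) function in B_{1/2}(X) already belongs to DBSC(X). -/
open Filter Topology
open scoped NNReal

/-- `f` is a difference of bounded semicontinuous functions. -/
def IsDBSC {X : Type*} [TopologicalSpace X] (f : X → ℝ) : Prop :=
  ∃ F₁ F₂ : X → ℝ, LowerSemicontinuous F₁ ∧ LowerSemicontinuous F₂ ∧
    (∃ M : ℝ, ∀ x, |F₁ x| ≤ M) ∧ (∃ M : ℝ, ∀ x, |F₂ x| ≤ M) ∧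
    ∀ x, f x = F₁ x - F₂ x

/-- `f` is Baire-1/2: a uniform limit of a sequence of DBSC functions. -/
def IsB12 {X : Type*} [TopologicalSpace X] (f : X → ℝ) : Prop :=
  ∃ g : ℕ → X → ℝ, (∀ n, IsDBSC (g n)) ∧ TendstoUniformly g f atTop

private lemma lsc_const_mul {X : Type*} [TopologicalSpace X] {F : X → ℝ}
    (h : LowerSemicontinuous F) {K : ℝ} (hK : 0 ≤ K) :
    LowerSemicontinuous (fun x => K * F x) := by
  rcases eq_or_lt_of_le hK with h0 | h0
  · simp only [← h0, zero_mul]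
    exact lowerSemicontinuous_const
  · intro x y hy
    have hy' : y / K < F x := (div_lt_iff₀' h0).2 hy
    filter_upwards [h x (y / K) hy'] with z hz
    calc y = K * (y / K) := by field_simp
    _ < K * F z := by exact (mul_lt_mul_iff_right₀ h0).2 hz

/-- DBSC is stable under composition with a Lipschitz function. -/
private lemma IsDBSC.comp_lip {X : Type*} [TopologicalSpace X] {g : X → ℝ}
    (hg : IsDBSC g) {ψ : ℝ → ℝ} {K : ℝ} (hK : 0 ≤ K)
    (hψ : ∀ a b, |ψ a - ψ b| ≤ K * |a - b|) :
    IsDBSC (fun x => ψ (g x)) := by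
  obtain ⟨F₁, F₂, h₁, h₂, ⟨M₁, hM₁⟩, ⟨M₂, hM₂⟩, hfg⟩ := hg
  refine ⟨fun x => ψ (g x) + K * (F₁ x + F₂ x), fun x => K * (F₁ x + F₂ x), ?_, ?_, ?_, ?_, ?_⟩
  · -- lower semicontinuity of ψ∘g + K(F₁+F₂)
    intro x y hy
    have hy' : y < ψ (g x) + K * (F₁ x + F₂ x) := hy
    set c : ℝ := ψ (g x) + K * (F₁ x + F₂ x) - y with hc
    have hcpos : 0 < c := by simp only [hc]; linarith
    set δ : ℝ := c / (2 * K + 1) with hδ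
    have hδpos : 0 < δ := div_pos hcpos (by linarith)
    filter_upwards [h₁ x (F₁ x - δ) (by linarith), h₂ x (F₂ x - δ) (by linarith)] with z hz₁ hz₂
    set a : ℝ := F₁ z - F₁ x with ha
    set b : ℝ := F₂ z - F₂ x with hb
    have haδ : -δ < a := by simp only [ha]; linarith
    have hbδ : -δ < b := by simp only [hb]; linarith
    have habs : |g z - g x| ≤ a + b + 2 * δ := by
      have : g z - g x = a - b := by rw [hfg z, hfg x]; ring
      rw [this]
      rcases abs_cases (a - b) with ⟨h', _⟩ | ⟨h', _⟩ <;> rw [h'] <;> linarith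
    have h1 : |ψ (g z) - ψ (g x)| ≤ K * (a + b + 2 * δ) :=
      le_trans (hψ (g z) (g x)) (mul_le_mul_of_nonneg_left habs hK)
    have h2 : ψ (g x) - K * (a + b + 2 * δ) ≤ ψ (g z) := by
      rcases abs_le.1 h1 with ⟨h1', _⟩; linarith
    have h3 : 2 * K * δ < c := by
      have : (2 * K + 1) * δ = c := by rw [hδ]; field_simp
      nlinarith
    have : K * (F₁ z + F₂ z) = K * (F₁ x + F₂ x) + K * (a + b) := by
      simp only [ha, hb]; ring
    nlinarith
  · exact lsc_const_mul (h₁.add h₂) hK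
  · refine ⟨K * (M₁ + M₂) + |ψ 0| + K * (M₁ + M₂), fun x => ?_⟩
    have hgb : |g x| ≤ M₁ + M₂ := by
      rw [hfg x]
      calc |F₁ x - F₂ x| ≤ |F₁ x| + |F₂ x| := abs_sub _ _
      _ ≤ M₁ + M₂ := add_le_add (hM₁ x) (hM₂ x)
    have hψb : |ψ (g x)| ≤ K * (M₁ + M₂) + |ψ 0| := by
      have := hψ (g x) 0
      have h2 : |ψ (g x)| - |ψ 0| ≤ |ψ (g x) - ψ 0| := abs_sub_abs_le_abs_sub _ _
      have h3 : K * |g x - 0| ≤ K * (M₁ + M₂) := by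
        rw [sub_zero]; exact mul_le_mul_of_nonneg_left hgb hK
      linarith
    have hFb : |K * (F₁ x + F₂ x)| ≤ K * (M₁ + M₂) := by
      rw [abs_mul, abs_of_nonneg hK]
      refine mul_le_mul_of_nonneg_left ?_ hK
      calc |F₁ x + F₂ x| ≤ |F₁ x| + |F₂ x| := abs_add_le _ _
      _ ≤ M₁ + M₂ := add_le_add (hM₁ x) (hM₂ x)
    calc |ψ (g x) + K * (F₁ x + F₂ x)| ≤ |ψ (g x)| + |K * (F₁ x + F₂ x)| := abs_add_le _ _
    _ ≤ K * (M₁ + M₂) + |ψ 0| + K * (M₁ + M₂) := by linarith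
  · refine ⟨K * (M₁ + M₂), fun x => ?_⟩
    rw [abs_mul, abs_of_nonneg hK]
    refine mul_le_mul_of_nonneg_left ?_ hK
    calc |F₁ x + F₂ x| ≤ |F₁ x| + |F₂ x| := abs_add_le _ _
    _ ≤ M₁ + M₂ := add_le_add (hM₁ x) (hM₂ x)
  · intro x; ring

private lemma IsDBSC.add' {X : Type*} [TopologicalSpace X] {f g : X → ℝ}
    (hf : IsDBSC f) (hg : IsDBSC g) : IsDBSC (f + g) := by
  obtain ⟨F₁, F₂, h₁, h₂, ⟨M₁, hM₁⟩, ⟨M₂, hM₂⟩, hff⟩ := hf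
  obtain ⟨G₁, G₂, k₁, k₂, ⟨N₁, hN₁⟩, ⟨N₂, hN₂⟩, hgg⟩ := hg
  refine ⟨fun x => F₁ x + G₁ x, fun x => F₂ x + G₂ x, h₁.add k₁, h₂.add k₂,
    ⟨M₁ + N₁, fun x => le_trans (abs_add_le _ _) (add_le_add (hM₁ x) (hN₁ x))⟩,
    ⟨M₂ + N₂, fun x => le_trans (abs_add_le _ _) (add_le_add (hM₂ x) (hN₂ x))⟩,
    fun x => ?_⟩
  simp only [Pi.add_apply, hff x, hgg x]; ring

theorem stmt_13 {X : Type*} [MetricSpace X] [CompactSpace X] :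
    (∀ f g : X → ℝ, IsB12 f → IsB12 g → IsB12 (f + g)) ∧
    (∀ (c : ℝ) (f : X → ℝ), IsB12 f → IsB12 (c • f)) ∧
    (∀ (g : ℕ → X → ℝ) (f : X → ℝ), (∀ n, IsB12 (g n)) →
      TendstoUniformly g f atTop → IsB12 f) ∧
    (∀ f : X → ℝ, (Set.range f).Finite → IsB12 f → IsDBSC f) := by
  classical
  refine ⟨?_, ?_, ?_, ?_⟩
  · -- addition
    rintro f g ⟨F, hF, hFu⟩ ⟨G, hG, hGu⟩
    refine ⟨fun n => F n + G n, fun n => (hF n).add' (hG n), ?_⟩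
    rw [Metric.tendstoUniformly_iff] at *
    intro ε hε
    filter_upwards [hFu (ε / 2) (by linarith), hGu (ε / 2) (by linarith)] with n h1 h2 x
    have := h1 x; have := h2 x
    simp only [Real.dist_eq, Pi.add_apply] at *
    calc |f x + g x - (F n x + G n x)| ≤ |f x - F n x| + |g x - G n x| := by
          have : f x + g x - (F n x + G n x) = (f x - F n x) + (g x - G n x) := by ring
          rw [this]; exact abs_add_le _ _
    _ < ε := by linarith
  · -- scalar multiplication
    rintro c f ⟨F, hF, hFu⟩
    refine ⟨fun n => c • F n, fun n => ?_, ?_⟩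
    · show IsDBSC (c • F n)
      have : (c • F n) = fun x => (fun t => c * t) (F n x) := by
        funext x; simp [mul_comm]
      rw [this]
      exact (hF n).comp_lip (abs_nonneg c) (fun a b => by rw [← mul_sub, abs_mul])
    · rw [Metric.tendstoUniformly_iff] at *
      intro ε hε
      have hpos : 0 < ε / (|c| + 1) := by positivity
      filter_upwards [hFu (ε / (|c| + 1)) hpos] with n hn x
      have h1 := hn x
      simp only [Real.dist_eq, Pi.smul_apply, smul_eq_mul] at *
      have h2 : |c * f x - c * F n x| = |c| * |f x - F n x| := by
        rw [← abs_mul]; ring_nf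
      rw [h2]
      have h3 : |c| * |f x - F n x| ≤ |c| * (ε / (|c| + 1)) :=
        mul_le_mul_of_nonneg_left (le_of_lt h1) (abs_nonneg c)
      have h4 : |c| * (ε / (|c| + 1)) < ε := by
        rw [mul_div_assoc']
        rw [div_lt_iff₀ (by positivity : (0:ℝ) < |c| + 1)]
        nlinarith [abs_nonneg c]
      linarith
  · -- closed under uniform limits
    intro g f hg hgu
    have hsel : ∀ n : ℕ, ∃ h : X → ℝ, IsDBSC h ∧ ∀ x, dist (g n x) (h x) < 1 / (n + 1) := by
      intro n
      obtain ⟨G, hG, hGu⟩ := hg n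
      obtain ⟨m, hm⟩ := (Metric.tendstoUniformly_iff.1 hGu (1 / (n + 1))
        (by positivity)).exists
      exact ⟨G m, hG m, hm⟩
    choose H hH1 hH2 using hsel
    refine ⟨H, hH1, ?_⟩
    rw [Metric.tendstoUniformly_iff]
    intro ε hε
    have hlim : Tendsto (fun n : ℕ => 1 / ((n : ℝ) + 1)) atTop (𝓝 0) :=
      tendsto_one_div_add_atTop_nhds_zero_nat
    filter_upwards [hlim.eventually_lt_const (show (0:ℝ) < ε / 2 by linarith),
      Metric.tendstoUniformly_iff.1 hgu (ε / 2) (by linarith)] with n h1 h2 x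
    calc dist (f x) (H n x) ≤ dist (f x) (g n x) + dist (g n x) (H n x) := dist_triangle _ _ _
    _ < ε / 2 + 1 / (n + 1) := add_lt_add (h2 x) (hH2 n x)
    _ < ε / 2 + ε / 2 := by linarith
    _ = ε := by ring
  · -- simple B1/2 functions are DBSC
    intro f hf hB
    by_cases hX : Nonempty X
    swap
    · exact ⟨fun _ => 0, fun _ => 0, lowerSemicontinuous_const, lowerSemicontinuous_const,
        ⟨0, fun x => by simp⟩, ⟨0, fun x => by simp⟩, fun x => (hX ⟨x⟩).elim⟩
    set s : Finset ℝ := hf.toFinset with hs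
    have hmem : ∀ x, f x ∈ s := fun x => hf.mem_toFinset.2 ⟨x, rfl⟩
    by_cases hconst : ∀ a ∈ s, ∀ b ∈ s, a = b
    · -- constant function
      obtain ⟨x₀⟩ := hX
      refine ⟨fun _ => f x₀, fun _ => 0, lowerSemicontinuous_const, lowerSemicontinuous_const,
        ⟨|f x₀|, fun x => le_refl _⟩, ⟨0, fun x => by simp⟩, fun x => ?_⟩
      rw [sub_zero]
      exact hconst _ (hmem x) _ (hmem x₀)
    · push_neg at hconst
      obtain ⟨a₀, ha₀, b₀, hb₀, hab₀⟩ := hconst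
      have hne : s.offDiag.Nonempty :=
        ⟨(a₀, b₀), by rw [Finset.mem_offDiag]; exact ⟨ha₀, hb₀, hab₀⟩⟩
      set gap : ℝ := s.offDiag.inf' hne (fun p => |p.1 - p.2|) with hgapdef
      have hgap : 0 < gap :=
        (Finset.lt_inf'_iff hne).2 fun p hp =>
          abs_pos.2 (sub_ne_zero.2 (Finset.mem_offDiag.1 hp).2.2)
      have hgaple : ∀ a ∈ s, ∀ b ∈ s, a ≠ b → gap ≤ |a - b| := by
        intro a ha b hb hab
        have hmemp : ((a, b) : ℝ × ℝ) ∈ s.offDiag := Finset.mem_offDiag.2 ⟨ha, hb, hab⟩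
        exact Finset.inf'_le _ hmemp
      set ε : ℝ := gap / 3 with hεdef
      have hεpos : 0 < ε := by positivity
      -- pick a DBSC function ε-close to f
      obtain ⟨G, hG, hGu⟩ := hB
      obtain ⟨n, hn⟩ := (Metric.tendstoUniformly_iff.1 hGu ε hεpos).exists
      set g : X → ℝ := G n with hgdef
      have hgD : IsDBSC g := hG n
      have hclose : ∀ x, |f x - g x| ≤ ε := fun x => le_of_lt (by
        have := hn x; rwa [Real.dist_eq] at this)
      -- uniqueness of the nearby value
      have huniq : ∀ (t a b : ℝ), a ∈ s → b ∈ s → |t - a| ≤ ε → |t - b| ≤ ε → a = b := by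
        intro t a b ha hb hta htb
        by_contra hab
        have h1 : gap ≤ |a - b| := hgaple a ha b hb hab
        have h2 : |a - b| ≤ |t - a| + |t - b| := by
          calc |a - b| = |(t - b) - (t - a)| := by congr 1; ring
          _ ≤ |t - b| + |t - a| := abs_sub _ _
          _ = |t - a| + |t - b| := by ring
        rw [hεdef] at hta htb
        linarith
      set S : Set ℝ := {t | ∃ a ∈ s, |t - a| ≤ ε} with hSdef
      set φ₀ : ℝ → ℝ := fun t =>
        if h : ∃ a ∈ s, |t - a| ≤ ε then h.choose else 0 with hφdef
      have hφ₀ : ∀ (t a : ℝ), a ∈ s → |t - a| ≤ ε → φ₀ t = a := by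
        intro t a ha hle
        have hex : ∃ b ∈ s, |t - b| ≤ ε := ⟨a, ha, hle⟩
        simp only [hφdef, dif_pos hex]
        obtain ⟨hb1, hb2⟩ := hex.choose_spec
        exact huniq t _ a hb1 ha hb2 hle
      have hlip : LipschitzOnWith 3 φ₀ S := by
        apply LipschitzOnWith.of_dist_le_mul
        rintro x ⟨a, ha, hxa⟩ y ⟨b, hb, hyb⟩
        rw [hφ₀ x a ha hxa, hφ₀ y b hb hyb, Real.dist_eq, Real.dist_eq]
        rcases eq_or_ne a b with rfl | hab
        · simp only [sub_self, abs_zero]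
          positivity
        · have h1 : gap ≤ |a - b| := hgaple a ha b hb hab
          have h2 : |a - b| ≤ |a - x| + |x - y| + |y - b| := by
            calc |a - b| ≤ |a - y| + |y - b| := abs_sub_le _ _ _
            _ ≤ |a - x| + |x - y| + |y - b| := by
                have := abs_sub_le a x y; linarith
          have h3 : |a - x| ≤ ε := by rw [abs_sub_comm]; exact hxa
          have h4 : |y - b| ≤ ε := hyb
          rw [show ((3 : ℝ≥0) : ℝ) = (3 : ℝ) by norm_num]
          rw [hεdef] at h3 h4
          linarith
      obtain ⟨ψ, hψlip, hψeq⟩ := hlip.extend_real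
      have hK : ∀ a b : ℝ, |ψ a - ψ b| ≤ 3 * |a - b| := by
        intro a b
        have := hψlip.dist_le_mul a b
        rw [Real.dist_eq, Real.dist_eq] at this
        rw [show ((3 : ℝ≥0) : ℝ) = (3 : ℝ) by norm_num] at this
        exact this
      have hgS : ∀ x, g x ∈ S := fun x =>
        ⟨f x, hmem x, by rw [abs_sub_comm]; exact hclose x⟩
      have hfeq : ∀ x, f x = ψ (g x) := by
        intro x
        rw [← hψeq (hgS x)]
        exact (hφ₀ (g x) (f x) (hmem x) (by rw [abs_sub_comm]; exact hclose x)).symm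
      have hfe : f = fun x => ψ (g x) := funext hfeq
      rw [hfe]
      exact hgD.comp_lip (by norm_num) hK
end

section
/- Let X be a set and (f_i) a sequence of [0,1]-valued functions on X. Suppose (f_i) has the NIP-type property: for all reals r < s there exists N such that for every choice of indices i_1 < ... < i_N there is no partition giving the full independence pattern, i.e., there exist no x-witnesses for all 2^N sign patterns. Equivalently assume: no subsequence of (f_i) is equivalent in sup-norm to the unit vector basis of ℓ^1. Then by Rosenthal's ℓ^1 theorem, (f_i) has a pointwise convergent subsequence on X. -/
open Filter Topology

namespace Ros

/-- `t` is a finite initial segment of the set `M`. -/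
def IsPref (t : Finset ℕ) (M : Set ℕ) : Prop :=
  ↑t ⊆ M ∧ ∀ m ∈ M, m ∉ t → ∀ a ∈ t, a < m

/-- `M` has an initial segment belonging to `F`. -/
def InG (F : Set (Finset ℕ)) (M : Set ℕ) : Prop := ∃ t ∈ F, IsPref t M

def Acc (F : Set (Finset ℕ)) (A : Set ℕ) (s : Finset ℕ) : Prop :=
  ∀ B ⊆ A, B.Infinite → InG F (↑s ∪ B)

def Rej (F : Set (Finset ℕ)) (A : Set ℕ) (s : Finset ℕ) : Prop :=
  ∀ B ⊆ A, B.Infinite → ¬ Acc F B s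

lemma Acc.mono {F : Set (Finset ℕ)} {A A' : Set ℕ} {s : Finset ℕ}
    (h : Acc F A s) (h' : A' ⊆ A) : Acc F A' s :=
  fun B hB => h B (hB.trans h')

lemma Rej.mono {F : Set (Finset ℕ)} {A A' : Set ℕ} {s : Finset ℕ}
    (h : Rej F A s) (h' : A' ⊆ A) : Rej F A' s :=
  fun B hB => h B (hB.trans h')

lemma decide (F : Set (Finset ℕ)) (A : Set ℕ) (hA : A.Infinite) (s : Finset ℕ) :
    ∃ B, B ⊆ A ∧ B.Infinite ∧ (Acc F B s ∨ Rej F B s) := by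
  by_cases h : ∃ B, B ⊆ A ∧ B.Infinite ∧ Acc F B s
  · obtain ⟨B, h1, h2, h3⟩ := h; exact ⟨B, h1, h2, Or.inl h3⟩
  · push_neg at h
    exact ⟨A, subset_rfl, hA, Or.inr fun B hB hBi => h B hB hBi⟩

/-- generic dependent-choice chain construction -/
lemma chainRec {α : Type*} (Q : ℕ → α → Prop) (R : ℕ → α → α → Prop) (a0 : α) (h0 : Q 0 a0)
    (hstep : ∀ n a, Q n a → ∃ b, Q (n + 1) b ∧ R n a b) :
    ∃ f : ℕ → α, f 0 = a0 ∧ (∀ n, Q n (f n)) ∧ ∀ n, R n (f n) (f (n + 1)) := by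
  have step' : ∀ n (p : {a // Q n a}), {b // Q (n + 1) b ∧ R n p.1 b} := fun n p =>
    Classical.indefiniteDescription _ (hstep n p.1 p.2)
  let g : ∀ n : ℕ, {a // Q n a} := fun n =>
    Nat.rec ⟨a0, h0⟩ (fun n p => ⟨(step' n p).1, (step' n p).2.1⟩) n
  exact ⟨fun n => (g n).1, rfl, fun n => (g n).2, fun n => (step' n (g n)).2.2⟩

lemma tail_infinite {A : Set ℕ} (hA : A.Infinite) (n : ℕ) : {m ∈ A | n < m}.Infinite := by
  have : {m ∈ A | n < m} = A \ {m | m ≤ n} := by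
    ext m
    simp only [Set.mem_setOf_eq, Set.mem_diff, Nat.not_le]
  rw [this]
  exact hA.diff (Set.finite_le_nat n)

lemma insert_sInf {B : Set ℕ} (hB : B.Nonempty) :
    B = insert (sInf B) {m ∈ B | sInf B < m} := by
  ext m
  constructor
  · intro hm
    rcases eq_or_lt_of_le (Nat.sInf_le hm) with h | h
    · exact h ▸ Set.mem_insert _ _
    · exact Set.mem_insert_of_mem _ ⟨hm, h⟩
  · rintro (rfl | ⟨hm, _⟩)
    · exact Nat.sInf_mem hB
    · exact hm

/-- Key lemma: if `A` rejects `s` then some infinite `B ⊆ A` rejects `insert n s` for all `n ∈ B`. -/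
lemma rej_extend {F : Set (Finset ℕ)} {A : Set ℕ} {s : Finset ℕ}
    (hA : A.Infinite) (hR : Rej F A s) :
    ∃ B, B ⊆ A ∧ B.Infinite ∧ ∀ n ∈ B, Rej F B (insert n s) := by
  classical
  -- chain of shrinking infinite sets deciding insert (sInf ·) s
  obtain ⟨g, hg0, hgQ, hgR⟩ := chainRec (fun _ C => C.Infinite ∧ C ⊆ A)
    (fun _ C C' => C' ⊆ {m ∈ C | sInf C < m} ∧
      (Acc F C' (insert (sInf C) s) ∨ Rej F C' (insert (sInf C) s)))
    A ⟨hA, subset_rfl⟩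
    (by
      intro k C hC
      obtain ⟨B, hB1, hB2, hB3⟩ := decide F {m ∈ C | sInf C < m} (tail_infinite hC.1 _)
        (insert (sInf C) s)
      exact ⟨B, ⟨hB2, (hB1.trans (Set.sep_subset _ _)).trans hC.2⟩, hB1, hB3⟩)
  set n : ℕ → ℕ := fun k => sInf (g k) with hn
  have hmem : ∀ k, n k ∈ g k := fun k => Nat.sInf_mem (hgQ k).1.nonempty
  have hstep : ∀ k, g (k + 1) ⊆ {m ∈ g k | n k < m} := fun k => (hgR k).1
  have hanti : ∀ k j, k ≤ j → g j ⊆ g k := by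
    intro k j hkj
    induction j with
    | zero => simp_all
    | succ j ih =>
      rcases Nat.lt_or_ge k (j + 1) with h | h
      · exact ((hstep j).trans (Set.sep_subset _ _)).trans (ih (Nat.lt_succ_iff.mp h))
      · have : k = j + 1 := le_antisymm hkj h
        subst this; exact subset_rfl
  have hnmono : StrictMono n := strictMono_nat_of_lt_succ fun k => (hstep k (hmem (k + 1))).2
  have hnm_mem : ∀ k j, k ≤ j → n j ∈ g k := fun k j hkj => hanti k j hkj (hmem j)
  have hsub_tail : ∀ (k : ℕ) (D : Set ℕ), D ⊆ n '' Set.univ → (∀ m ∈ D, n k < m) →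
      D ⊆ g (k + 1) := by
    intro k D hD hDlt m hm
    obtain ⟨j, -, rfl⟩ := hD hm
    have hjk : k < j := hnmono.lt_iff_lt.mp (hDlt _ hm)
    exact hnm_mem (k + 1) j hjk
  set SAcc := {k | Acc F (g (k + 1)) (insert (n k) s)} with hSAcc
  have hfin : SAcc.Finite := by
    by_contra hinf
    rw [← Set.Infinite] at hinf
    have hCinf : (n '' SAcc).Infinite := hinf.image hnmono.injective.injOn
    have hCA : n '' SAcc ⊆ A := by
      rintro _ ⟨k, -, rfl⟩; exact (hgQ k).2 (hmem k)
    refine hR (n '' SAcc) hCA hCinf ?_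
    intro B hB hBi
    have hBne : B.Nonempty := hBi.nonempty
    obtain ⟨k, hkS, hkB⟩ := hB (Nat.sInf_mem hBne)
    set B' := {m ∈ B | sInf B < m} with hB'
    have hB'sub : B' ⊆ g (k + 1) := by
      apply hsub_tail
      · exact fun m hm => (hB hm.1).imp fun j hj => ⟨trivial, hj.2⟩
      · intro m hm; rw [hkB]; exact hm.2
    have hB'i : B'.Infinite := tail_infinite hBi _
    have := hkS B' hB'sub hB'i
    have heq : (↑(insert (n k) s) : Set ℕ) ∪ B' = ↑s ∪ B := by
      ext m
      simp only [Finset.coe_insert, Set.mem_union, Set.mem_insert_iff, Finset.mem_coe, hB',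
        Set.mem_setOf_eq]
      constructor
      · rintro ((rfl | hs) | ⟨hmB, -⟩)
        · exact Or.inr (hkB ▸ Nat.sInf_mem hBne)
        · exact Or.inl hs
        · exact Or.inr hmB
      · rintro (hs | hmB)
        · exact Or.inl (Or.inr hs)
        · rcases eq_or_lt_of_le (Nat.sInf_le hmB) with h | h
          · exact Or.inl (Or.inl (hkB.trans h).symm)
          · exact Or.inr ⟨hmB, h⟩
    rwa [heq] at this
  obtain ⟨K, hK⟩ : ∃ K, ∀ k ∈ SAcc, k < K := by
    rcases hfin.bddAbove with ⟨K, hK⟩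
    exact ⟨K + 1, fun k hk => Nat.lt_succ_of_le (hK hk)⟩
  refine ⟨n '' {k | K ≤ k}, ?_, ?_, ?_⟩
  · rintro _ ⟨k, -, rfl⟩; exact (hgQ k).2 (hmem k)
  · exact (Set.infinite_of_injective_forall_mem (f := fun k : {k // K ≤ k} => n k.1)
      (fun a b hab => Subtype.ext (hnmono.injective hab))
      (fun k => ⟨k.1, k.2, rfl⟩))
  · rintro _ ⟨k, hkK, rfl⟩
    have hrejk : Rej F (g (k + 1)) (insert (n k) s) := by
      rcases (hgR k).2 with h | h
      · exact absurd h (by intro hc; exact absurd hkK (by simpa using Nat.not_le.mpr (hK k hc)))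
      · exact h
    intro C hC hCi hacc
    set C' := {m ∈ C | n k < m} with hC'
    have hC'sub : C' ⊆ g (k + 1) := by
      apply hsub_tail
      · exact fun m hm => (hC hm.1).imp fun j hj => ⟨trivial, hj.2⟩
      · exact fun m hm => hm.2
    exact hrejk C' hC'sub (tail_infinite hCi _) (hacc.mono (Set.sep_subset _ _))

end Ros

namespace Ros

lemma rej_extend_finset {F : Set (Finset ℕ)} {A : Set ℕ} (S : Finset (Finset ℕ))
    (hA : A.Infinite) (hS : ∀ s ∈ S, Rej F A s) :
    ∃ B, B ⊆ A ∧ B.Infinite ∧ ∀ s ∈ S, ∀ n ∈ B, Rej F B (insert n s) := by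
  classical
  induction S using Finset.induction_on generalizing A with
  | empty => exact ⟨A, subset_rfl, hA, by simp⟩
  | @insert s S hsS ih =>
    obtain ⟨B₁, hB₁A, hB₁i, hB₁⟩ := ih hA (fun t ht => hS t (Finset.mem_insert_of_mem ht))
    obtain ⟨B₂, hB₂B₁, hB₂i, hB₂⟩ := rej_extend hB₁i
      ((hS s (Finset.mem_insert_self s S)).mono hB₁A)
    refine ⟨B₂, hB₂B₁.trans hB₁A, hB₂i, ?_⟩
    intro t ht n hn
    rcases Finset.mem_insert.mp ht with rfl | htS
    · exact hB₂ n hn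
    · exact (hB₁ t htS n (hB₂B₁ hn)).mono hB₂B₁

/-- Galvin–Prikry-type theorem for families determined by initial segments. -/
theorem GP (F : Set (Finset ℕ)) :
    ∃ H : Set ℕ, H.Infinite ∧
      ((∀ M ⊆ H, M.Infinite → InG F M) ∨ (∀ M ⊆ H, M.Infinite → ¬ InG F M)) := by
  classical
  obtain ⟨A, -, hAinf, hAcase⟩ := decide F Set.univ Set.infinite_univ ∅
  rcases hAcase with hacc | hrej
  · refine ⟨A, hAinf, Or.inl fun M hM hMi => ?_⟩
    have := hacc M hM hMi
    simpa using this
  · obtain ⟨g, hg0, hgQ, hgR⟩ := chainRec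
      (fun _ p => p.2.Infinite ∧ p.2 ⊆ A ∧ (∀ s ∈ (p.1 : Finset ℕ).powerset, Rej F p.2 s) ∧
        (∀ a ∈ p.1, ∀ m ∈ p.2, a < m))
      (fun _ p p' => ∃ b, b ∈ p.2 ∧ p'.1 = insert b p.1 ∧ p'.2 ⊆ p.2 ∧ ∀ m ∈ p'.2, b < m)
      ((∅ : Finset ℕ), A)
      (by
        refine ⟨hAinf, subset_rfl, ?_, by simp⟩
        intro s hs
        simp only [Finset.powerset_empty, Finset.mem_singleton] at hs
        subst hs; exact hrej)
      (by
        rintro k ⟨t, B⟩ ⟨hBi, hBA, hBrej, hord⟩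
        obtain ⟨B₁, hB₁B, hB₁i, hB₁⟩ := rej_extend_finset t.powerset hBi
          (fun s hs => hBrej s hs)
        set b := sInf B₁ with hb
        have hbB₁ : b ∈ B₁ := Nat.sInf_mem hB₁i.nonempty
        refine ⟨(insert b t, {m ∈ B₁ | b < m}), ⟨tail_infinite hB₁i b,
          ((Set.sep_subset _ _).trans hB₁B).trans hBA, ?_, ?_⟩,
          b, hB₁B hbB₁, rfl, (Set.sep_subset _ _).trans hB₁B, fun m hm => hm.2⟩
        · intro s hs
          rw [Finset.mem_powerset] at hs
          by_cases hbs : b ∈ s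
          · have hsub : s.erase b ⊆ t := by
              intro a ha
              rcases Finset.mem_insert.mp (hs (Finset.mem_of_mem_erase ha)) with h | h
              · exact absurd h (Finset.mem_erase.mp ha).1
              · exact h
            have := hB₁ (s.erase b) (Finset.mem_powerset.mpr hsub) b hbB₁
            rw [Finset.insert_erase hbs] at this
            exact this.mono (Set.sep_subset _ _)
          · have hsub : s ⊆ t := by
              intro a ha
              rcases Finset.mem_insert.mp (hs ha) with rfl | h
              · exact absurd ha hbs
              · exact h
            exact (hBrej s (Finset.mem_powerset.mpr hsub)).mono
              ((Set.sep_subset _ _).trans hB₁B)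
        · intro a ha m hm
          rcases Finset.mem_insert.mp ha with rfl | h
          · exact hm.2
          · exact hord a h m (hB₁B hm.1)
      )
    choose b hbmem hbins hbsub hblt using hgR
    set t : ℕ → Finset ℕ := fun k => (g k).1 with ht
    set B : ℕ → Set ℕ := fun k => (g k).2 with hB
    have hBanti : ∀ k j, k ≤ j → B j ⊆ B k := by
      intro k j hkj
      induction j with
      | zero => simp_all
      | succ j ih =>
        rcases Nat.lt_or_ge k (j + 1) with h | h
        · exact (hbsub j).trans (ih (Nat.lt_succ_iff.mp h))
        · have : k = j + 1 := le_antisymm hkj h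
          subst this; exact subset_rfl
    have hbmono : StrictMono b := strictMono_nat_of_lt_succ fun k =>
      hblt k _ (hbmem (k + 1))
    have hbBk : ∀ k j, k ≤ j → b j ∈ B k := fun k j hkj => hBanti k j hkj (hbmem j)
    have htco : ∀ k, (↑(t k) : Set ℕ) = b '' Set.Iio k := by
      intro k
      induction k with
      | zero =>
        have h0 : t 0 = ∅ := by show (g 0).1 = ∅; rw [hg0]
        rw [h0]
        ext m
        simp
      | succ k ih =>
        have h1 : t (k + 1) = insert (b k) (t k) := hbins k
        rw [h1]
        push_cast
        rw [ih]
        ext m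
        simp only [Set.mem_insert_iff, Set.mem_image, Set.mem_Iio]
        constructor
        · rintro (rfl | ⟨j, hj, rfl⟩)
          · exact ⟨k, Nat.lt_succ_self k, rfl⟩
          · exact ⟨j, hj.trans (Nat.lt_succ_self k), rfl⟩
        · rintro ⟨j, hj, rfl⟩
          rcases Nat.lt_succ_iff_lt_or_eq.mp hj with h | rfl
          · exact Or.inr ⟨j, h, rfl⟩
          · exact Or.inl rfl
    refine ⟨Set.range b, Set.infinite_range_of_injective hbmono.injective, Or.inr ?_⟩
    rintro M hM hMi ⟨t', ht'F, ht'sub, -⟩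
    have ht'r : ∀ a ∈ t', ∃ j, j < t'.sup id + 1 ∧ b j = a := by
      intro a ha
      obtain ⟨j, rfl⟩ := hM (ht'sub ha)
      exact ⟨j, Nat.lt_succ_of_le ((hbmono.le_apply).trans (Finset.le_sup (f := id) ha)),
        rfl⟩
    set K := t'.sup id + 1 with hK
    have ht'K : t' ⊆ t K := by
      intro a ha
      obtain ⟨j, hj, rfl⟩ := ht'r a ha
      have : b j ∈ (↑(t K) : Set ℕ) := by rw [htco]; exact ⟨j, hj, rfl⟩
      exact this
    have hRej : Rej F (B K) t' := (hgQ K).2.2.1 t' (Finset.mem_powerset.mpr ht'K)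
    set C := Set.range (fun i : ℕ => b (K + i)) with hC
    have hCsub : C ⊆ B K := by rintro _ ⟨i, rfl⟩; exact hbBk K (K + i) (Nat.le_add_right K i)
    have hCinf : C.Infinite := Set.infinite_range_of_injective
      (fun i j hij => by
        have := hbmono.injective hij; omega)
    refine hRej C hCsub hCinf ?_
    intro D hD hDi
    refine ⟨t', ht'F, Set.subset_union_left, ?_⟩
    rintro m (hm | hm) hmt'
    · exact absurd hm hmt'
    · intro a ha
      exact (hgQ K).2.2.2 a (ht'K ha) m (hCsub (hD hm))

end Ros

namespace Ros

variable {X : Type*}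

open Finset in
/-- positions within a finite set; `A` at even positions, `B` at odd. -/
def Sat (A B : ℕ → Set X) (s : Finset ℕ) : Prop :=
  ∃ x : X, ∀ n ∈ s, (Even ((s.filter (· < n)).card) → x ∈ A n) ∧
    (¬ Even ((s.filter (· < n)).card) → x ∈ B n)

lemma image_card_filter {g : ℕ → ℕ} (hg : StrictMono g) (J i : ℕ) (hiJ : i < J) :
    ((((Finset.range J).image g)).filter (· < g i)).card = i := by
  classical
  have : (((Finset.range J).image g)).filter (· < g i) = (Finset.range i).image g := by
    ext m
    simp only [Finset.mem_filter, Finset.mem_image, Finset.mem_range]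
    constructor
    · rintro ⟨⟨j, hjJ, rfl⟩, hlt⟩
      exact ⟨j, hg.lt_iff_lt.mp hlt, rfl⟩
    · rintro ⟨j, hji, rfl⟩
      exact ⟨⟨j, hji.trans hiJ, rfl⟩, hg.lt_iff_lt.mpr hji⟩
  rw [this, Finset.card_image_of_injective _ hg.injective, Finset.card_range]

lemma pref_image {g : ℕ → ℕ} (hg : StrictMono g) (J : ℕ) :
    IsPref ((Finset.range J).image g) (Set.range g) := by
  constructor
  · intro m hm
    simp only [Finset.coe_image, Set.mem_image] at hm
    obtain ⟨j, -, rfl⟩ := hm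
    exact ⟨j, rfl⟩
  · rintro m ⟨j, rfl⟩ hnot a ha
    simp only [Finset.mem_image, Finset.mem_range] at ha
    obtain ⟨i, hiJ, rfl⟩ := ha
    have hjJ : ¬ j < J := fun hj => hnot (Finset.mem_image.mpr ⟨j, Finset.mem_range.mpr hj, rfl⟩)
    exact hg (hiJ.trans_le (Nat.le_of_not_lt hjJ))

lemma lowerset_eq_range {s : Finset ℕ} (h : ∀ j ∈ s, ∀ j' < j, j' ∈ s) :
    s = Finset.range s.card := by
  classical
  have hsub : s ⊆ Finset.range s.card := by
    intro j hj
    rw [Finset.mem_range]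
    by_contra hge
    have : Finset.range (j + 1) ⊆ s := by
      intro j' hj'
      rw [Finset.mem_range, Nat.lt_succ_iff] at hj'
      rcases eq_or_lt_of_le hj' with rfl | h'
      · exact hj
      · exact h j hj j' h'
    have := Finset.card_le_card this
    rw [Finset.card_range] at this
    omega
  exact Finset.eq_of_subset_of_card_le hsub (by rw [Finset.card_range])

lemma pref_of_range {g : ℕ → ℕ} (hg : StrictMono g) {t : Finset ℕ}
    (h : IsPref t (Set.range g)) : t = (Finset.range t.card).image g := by
  classical
  set s : Finset ℕ := t.preimage g (hg.injective.injOn) with hs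
  have himg : s.image g = t := by
    rw [hs, Finset.image_preimage]
    rw [Finset.filter_true_of_mem]
    intro m hm
    exact (h.1 hm).imp fun j hj => hj
  have hcard : s.card = t.card := by rw [← himg, Finset.card_image_of_injective _ hg.injective]
  have hlow : ∀ j ∈ s, ∀ j' < j, j' ∈ s := by
    intro j hj j' hj'
    rw [hs, Finset.mem_preimage] at hj ⊢
    by_contra hj's
    have hgj' : g j' ∈ Set.range g := ⟨j', rfl⟩
    have := h.2 (g j') hgj' hj's (g j) hj
    exact absurd (hg hj') (lt_asymm this)
  conv_lhs => rw [← himg]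
  rw [lowerset_eq_range hlow, hcard]

lemma pairLemma (A B : ℕ → Set X) :
    ∃ ψ : ℕ → ℕ, StrictMono ψ ∧
      ((∀ (k : ℕ) (P : ℕ → Prop), ∃ x : X, ∀ i < k,
          (P i → x ∈ A (ψ i)) ∧ (¬ P i → x ∈ B (ψ i))) ∨
       (∀ x : X, ¬((∀ N, ∃ n ≥ N, x ∈ A (ψ n)) ∧ (∀ N, ∃ n ≥ N, x ∈ B (ψ n))))) := by
  classical
  obtain ⟨H, hHinf, hcase⟩ := GP {s | ¬ Sat A B s}
  set h : ℕ → ℕ := Nat.nth (· ∈ H) with hh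
  have hmono : StrictMono h := Nat.nth_strictMono hHinf
  have hmem : ∀ n, h n ∈ H := Nat.nth_mem_of_infinite hHinf
  rcases hcase with hyes | hno
  · -- every infinite subset has an unsatisfiable initial segment ⇒ no oscillation
    refine ⟨h, hmono, Or.inr ?_⟩
    rintro x ⟨hA, hB⟩
    obtain ⟨v, -, hvQ, hvR⟩ := chainRec
      (fun j n => (Even j → x ∈ A (h n)) ∧ (¬ Even j → x ∈ B (h n)))
      (fun _ n n' => n < n')
      (Classical.choose (hA 0))
      (by
        obtain ⟨hge, hmem0⟩ := Classical.choose_spec (hA 0)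
        exact ⟨fun _ => hmem0, fun he => absurd Even.zero he⟩)
      (by
        intro j n hQ
        by_cases hev : Even (j + 1)
        · obtain ⟨m, hm1, hm2⟩ := hA (n + 1)
          exact ⟨m, ⟨fun _ => hm2, fun hc => absurd hev hc⟩, hm1⟩
        · obtain ⟨m, hm1, hm2⟩ := hB (n + 1)
          exact ⟨m, ⟨fun hc => absurd hc hev, fun _ => hm2⟩, hm1⟩)
    have hvmono : StrictMono v := strictMono_nat_of_lt_succ hvR
    set g := h ∘ v with hg
    have hgmono : StrictMono g := hmono.comp hvmono
    have hMsub : Set.range g ⊆ H := by rintro _ ⟨j, rfl⟩; exact hmem (v j)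
    have hMinf : (Set.range g).Infinite := Set.infinite_range_of_injective hgmono.injective
    obtain ⟨t, htF, htpref⟩ := hyes (Set.range g) hMsub hMinf
    refine htF ?_
    rw [pref_of_range hgmono htpref]
    refine ⟨x, ?_⟩
    intro m hmt
    rw [Finset.mem_image] at hmt
    obtain ⟨j, hj, rfl⟩ := hmt
    rw [Finset.mem_range] at hj
    rw [← pref_of_range hgmono htpref, pref_of_range hgmono htpref,
      image_card_filter hgmono _ j hj]
    exact (hvQ j).imp (fun ha hev => ha hev) (fun hb hod => hb hod)
  · -- all initial segments of subsets are satisfiable ⇒ independence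
    refine ⟨fun i => h (4 * i + 4), fun i j hij => hmono (by omega), Or.inl ?_⟩
    intro k P
    set u : ℕ → ℕ := fun j =>
      if j % 2 = 0 then (if P (j / 2) then 4 * (j / 2) + 4 else 4 * (j / 2) + 2)
      else (if P (j / 2) then 4 * (j / 2) + 5 else 4 * (j / 2) + 4) with hu
    have humono : StrictMono u := by
      apply strictMono_nat_of_lt_succ
      intro j
      obtain ⟨d, rfl | rfl⟩ := Nat.even_or_odd' j
      · have e1 : 2 * d % 2 = 0 := by omega
        have e2 : (2 * d + 1) % 2 = 1 := by omega
        have e3 : 2 * d / 2 = d := by omega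
        have e4 : (2 * d + 1) / 2 = d := by omega
        simp only [hu, e1, e2, e3, e4]
        norm_num
        split_ifs <;> omega
      · have e1 : (2 * d + 1) % 2 = 1 := by omega
        have e2 : (2 * d + 1 + 1) % 2 = 0 := by omega
        have e3 : (2 * d + 1) / 2 = d := by omega
        have e4 : (2 * d + 1 + 1) / 2 = d + 1 := by omega
        simp only [hu, e1, e2, e3, e4]
        norm_num
        split_ifs <;> omega
    set g := h ∘ u with hg
    have hgmono : StrictMono g := hmono.comp humono
    have hMsub : Set.range g ⊆ H := by rintro _ ⟨j, rfl⟩; exact hmem (u j)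
    have hMinf : (Set.range g).Infinite := Set.infinite_range_of_injective hgmono.injective
    have hsat : Sat A B ((Finset.range (2 * k)).image g) := by
      by_contra hns
      exact hno (Set.range g) hMsub hMinf ⟨_, hns, pref_image hgmono (2 * k)⟩
    obtain ⟨x, hx⟩ := hsat
    refine ⟨x, ?_⟩
    intro i hik
    set j := 2 * i + (if P i then 0 else 1) with hj
    have hjmod : j % 2 = 0 ↔ P i := by
      by_cases hP : P i <;> simp [hj, hP, Nat.add_mul_mod_self_left] <;> omega
    have hjdiv : j / 2 = i := by by_cases hP : P i <;> simp [hj, hP] <;> omega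
    have hji : u j = 4 * i + 4 := by
      by_cases hP : P i
      · have : j % 2 = 0 := hjmod.mpr hP
        simp [hu, this, hjdiv, hP]
      · have : ¬ j % 2 = 0 := fun hc => hP (hjmod.mp hc)
        simp [hu, this, hjdiv, hP]
    have hjJ : j < 2 * k := by by_cases hP : P i <;> simp [hj, hP] <;> omega
    have hgmem : g j ∈ (Finset.range (2 * k)).image g :=
      Finset.mem_image.mpr ⟨j, Finset.mem_range.mpr hjJ, rfl⟩
    have hcard := image_card_filter hgmono (2 * k) j hjJ
    have hxj := hx (g j) hgmem
    rw [hcard] at hxj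
    have hgj : g j = h (4 * i + 4) := by rw [hg]; simp only [Function.comp_apply, hji]
    have hevj : Even j ↔ P i := by
      rw [Nat.even_iff, hjmod]
    constructor
    · intro hP
      have := hxj.1 (hevj.mpr hP)
      rwa [hgj] at this
    · intro hP
      have := hxj.2 (fun hc => hP (hevj.mp hc))
      rwa [hgj] at this

end Ros

namespace Ros

lemma l1bound {X : Type*} (f : ℕ → X → ℝ) (hf : ∀ i x, f i x ∈ Set.Icc (0 : ℝ) 1)
    (θ : ℕ → ℕ) (r s : ℝ)
    (ind : ∀ (k : ℕ) (P : ℕ → Prop), ∃ x : X, ∀ i < k,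
      (P i → s < f (θ i) x) ∧ (¬ P i → f (θ i) x < r)) :
    ∀ (k : ℕ) (c : ℕ → ℝ),
      (s - r) / 2 * ∑ i ∈ Finset.range k, |c i| ≤
        ⨆ x : X, |∑ i ∈ Finset.range k, c i * f (θ i) x| := by
  intro k c
  obtain ⟨x, hx⟩ := ind k (fun i => 0 ≤ c i)
  obtain ⟨y, hy⟩ := ind k (fun i => ¬ 0 ≤ c i)
  have key : (s - r) * ∑ i ∈ Finset.range k, |c i| ≤
      (∑ i ∈ Finset.range k, c i * f (θ i) x) - ∑ i ∈ Finset.range k, c i * f (θ i) y := by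
    rw [← Finset.sum_sub_distrib, Finset.mul_sum]
    apply Finset.sum_le_sum
    intro i hi
    rw [Finset.mem_range] at hi
    rcases le_or_gt 0 (c i) with hc | hc
    · have h1 := (hx i hi).1 hc
      have h2 := (hy i hi).2 (not_not_intro hc)
      rw [abs_of_nonneg hc]
      nlinarith [mul_le_mul_of_nonneg_left
        (show s - r ≤ f (θ i) x - f (θ i) y by linarith) hc]
    · have h1 := (hx i hi).2 (not_le.mpr hc)
      have h2 := (hy i hi).1 (not_le.mpr hc)
      rw [abs_of_neg hc]
      nlinarith [mul_le_mul_of_nonneg_left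
        (show s - r ≤ f (θ i) y - f (θ i) x by linarith) (show (0:ℝ) ≤ -c i by linarith)]
  have hbdd : BddAbove (Set.range fun z : X => |∑ i ∈ Finset.range k, c i * f (θ i) z|) := by
    refine ⟨∑ i ∈ Finset.range k, |c i|, ?_⟩
    rintro _ ⟨z, rfl⟩
    calc |∑ i ∈ Finset.range k, c i * f (θ i) z| ≤ ∑ i ∈ Finset.range k, |c i * f (θ i) z| :=
        Finset.abs_sum_le_sum_abs _ _
      _ ≤ ∑ i ∈ Finset.range k, |c i| := by
          apply Finset.sum_le_sum
          intro i hi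
          have h0 := (hf (θ i) z).1
          have h1 := (hf (θ i) z).2
          rw [abs_mul, abs_of_nonneg h0]
          nlinarith [abs_nonneg (c i)]
  have hx' := le_ciSup hbdd x
  have hy' := le_ciSup hbdd y
  have ax : (∑ i ∈ Finset.range k, c i * f (θ i) x) ≤
      |∑ i ∈ Finset.range k, c i * f (θ i) x| := le_abs_self _
  have ay : -(∑ i ∈ Finset.range k, c i * f (θ i) y) ≤
      |∑ i ∈ Finset.range k, c i * f (θ i) y| := neg_le_abs _
  simp only [iSup] at *
  linarith

end Ros

open Ros

theorem stmt_14 {X : Type*} (f : ℕ → X → ℝ)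
    (hf : ∀ i x, f i x ∈ Set.Icc (0 : ℝ) 1)
    (hNIP : ¬ ∃ φ : ℕ → ℕ, StrictMono φ ∧ ∃ δ : ℝ, 0 < δ ∧
      ∀ (k : ℕ) (c : ℕ → ℝ),
        δ * ∑ i ∈ Finset.range k, |c i| ≤
          ⨆ x : X, |∑ i ∈ Finset.range k, c i * f (φ i) x|) :
    ∃ φ : ℕ → ℕ, StrictMono φ ∧
      ∀ x : X, ∃ L : ℝ, Tendsto (fun n => f (φ n) x) atTop (𝓝 L) := by
  classical
  obtain ⟨e, he⟩ := exists_surjective_nat (ℚ × ℚ)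
  obtain ⟨Φ, hΦ0, hΦQ, hΦR⟩ := chainRec (fun _ φ => StrictMono φ)
    (fun k φ φ' => (∃ ψ : ℕ → ℕ, StrictMono ψ ∧ φ' = φ ∘ ψ) ∧
      (((e k).1 : ℝ) < ((e k).2 : ℝ) → ∀ x : X,
        ¬((∀ N, ∃ n ≥ N, ((e k).2 : ℝ) < f (φ' n) x) ∧
          (∀ N, ∃ n ≥ N, f (φ' n) x < ((e k).1 : ℝ)))))
    id strictMono_id
    (by
      intro k φ hφ
      by_cases hrs : ((e k).1 : ℝ) < ((e k).2 : ℝ)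
      · obtain ⟨ψ, hψ, hcase⟩ := pairLemma (X := X)
          (fun n => {x : X | ((e k).2 : ℝ) < f (φ n) x})
          (fun n => {x : X | f (φ n) x < ((e k).1 : ℝ)})
        rcases hcase with hind | h2
        · exfalso
          apply hNIP
          refine ⟨φ ∘ ψ, hφ.comp hψ, (((e k).2 : ℝ) - ((e k).1 : ℝ)) / 2, by linarith, ?_⟩
          exact l1bound f hf (φ ∘ ψ) _ _ (fun k' P => hind k' P)
        · exact ⟨φ ∘ ψ, hφ.comp hψ, ⟨ψ, hψ, rfl⟩, fun _ x hosc => h2 x hosc⟩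
      · exact ⟨φ ∘ id, hφ, ⟨id, strictMono_id, rfl⟩, fun h => absurd h hrs⟩)
  have hcomp : ∀ k, ∃ ψ, StrictMono ψ ∧ Φ (k + 1) = Φ k ∘ ψ := fun k => (hΦR k).1
  choose ψ hψmono hψeq using hcomp
  have hprop := fun k => (hΦR k).2
  set phiD : ℕ → ℕ := fun n => Φ n n with hphi
  have hphiD : StrictMono phiD := by
    apply strictMono_nat_of_lt_succ
    intro n
    have h1 : Φ (n + 1) (n + 1) = Φ n (ψ n (n + 1)) := by rw [hψeq n]; rfl
    show Φ n n < Φ (n + 1) (n + 1)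
    rw [h1]
    exact hΦQ n (lt_of_lt_of_le (Nat.lt_succ_self n) (hψmono n).le_apply)
  refine ⟨phiD, hphiD, fun x => ?_⟩
  set u : ℕ → ℝ := fun n => f (phiD n) x with hu
  have hub : IsBoundedUnder (· ≤ ·) atTop u := isBoundedUnder_of ⟨1, fun n => (hf _ x).2⟩
  have hlb : IsBoundedUnder (· ≥ ·) atTop u := isBoundedUnder_of ⟨0, fun n => (hf _ x).1⟩
  rcases eq_or_lt_of_le (liminf_le_limsup hub hlb) with heq | hlt
  · exact ⟨liminf u atTop, tendsto_of_liminf_eq_limsup rfl heq.symm hub hlb⟩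
  exfalso
  obtain ⟨r, hr1, hr2⟩ := exists_rat_btwn hlt
  obtain ⟨s, hs1, hs2⟩ := exists_rat_btwn hr2
  obtain ⟨k, hk⟩ := he (r, s)
  -- subsequence relation beyond stage k+1
  set τ : ℕ → ℕ → ℕ := fun j => Nat.rec id (fun j' t => t ∘ ψ (k + 1 + j')) j with hτ
  have hτ0 : τ 0 = id := rfl
  have hτs : ∀ j, τ (j + 1) = τ j ∘ ψ (k + 1 + j) := fun j => rfl
  have hτmono : ∀ j, StrictMono (τ j) := by
    intro j
    induction j with
    | zero => exact strictMono_id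
    | succ j ih => rw [hτs]; exact ih.comp (hψmono _)
  have hτeq : ∀ j, Φ (k + 1 + j) = Φ (k + 1) ∘ τ j := by
    intro j
    induction j with
    | zero => rfl
    | succ j ih =>
      have : k + 1 + (j + 1) = (k + 1 + j) + 1 := by omega
      rw [this, hψeq (k + 1 + j), ih, hτs]
      rfl
  have hτapp : ∀ m, k + 1 ≤ m → Φ m m = Φ (k + 1) (τ (m - (k + 1)) m) := by
    intro m hm
    have h1 : k + 1 + (m - (k + 1)) = m := by omega
    conv_lhs => rw [← h1]
    rw [hτeq]
    show Φ (k + 1) (τ (m - (k + 1)) (k + 1 + (m - (k + 1)))) = _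
    rw [h1]
  have hrs : ((e k).1 : ℝ) < ((e k).2 : ℝ) := by
    rw [hk]
    exact_mod_cast hs1
  apply hprop k hrs x
  constructor
  · intro N
    have hs2' : ((e k).2 : ℝ) < limsup u atTop := by rw [hk]; exact_mod_cast hs2
    have hfreq := frequently_lt_of_lt_limsup (hlb.isCoboundedUnder_le) hs2'
    obtain ⟨m, hm1, hm2⟩ := (frequently_atTop.mp hfreq) (N + (k + 1))
    refine ⟨τ (m - (k + 1)) m, ?_, ?_⟩
    · have := (hτmono (m - (k + 1))).le_apply (x := m)
      omega
    · have heqm := hτapp m (by omega)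
      show ((e k).2 : ℝ) < f (Φ (k + 1) (τ (m - (k + 1)) m)) x
      rw [← heqm]
      exact hm2
  · intro N
    have hr1' : liminf u atTop < ((e k).1 : ℝ) := by rw [hk]; exact_mod_cast hr1
    have hfreq := frequently_lt_of_liminf_lt (hub.isCoboundedUnder_ge) hr1'
    obtain ⟨m, hm1, hm2⟩ := (frequently_atTop.mp hfreq) (N + (k + 1))
    refine ⟨τ (m - (k + 1)) m, ?_, ?_⟩
    · have := (hτmono (m - (k + 1))).le_apply (x := m)
      omega
    · have heqm := hτapp m (by omega)
      show f (Φ (k + 1) (τ (m - (k + 1)) m)) x < ((e k).1 : ℝ)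
      rw [← heqm]
      exact hm2
end

section
/- Let X be a compact Hausdorff space and (f_n) a uniformly bounded sequence of continuous [0,1]-valued functions on X such that for some r < s and all disjoint finite sets E, F ⊆ ℕ, the set ⋂_{n∈E}{x : f_n(x) ≤ r} ∩ ⋂_{n∈F}{x : f_n(x) ≥ s} is nonempty. Then the pointwise closure of {f_n : n ∈ ℕ} in [0,1]^X contains at least 2^{2^{ℵ_0}} distinct cluster points of (f_n). -/
open Filter Topology

namespace Stmt15Aux

noncomputable section

/-- The countable index type for the independent family. -/
abbrev Iot : Type := (Finset ℚ × Finset (Finset ℚ)) × ℕ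

/-- The "trace" of a real number on a finite set of rationals. -/
def trc (s : Finset ℚ) (t : ℝ) : Finset ℚ := s.filter (fun q => (q : ℝ) < t)

/-- An independent family of subsets of `Iot`, indexed by the reals
(Fichtenholz–Kantorovich). -/
def Afam (t : ℝ) : Set Iot := {p | trc p.1.1 t ∈ p.1.2}

lemma key (E F : Finset ℝ) (hEF : Disjoint E F) (k : ℕ) :
    ∃ p : Iot, p.2 = k ∧ (∀ t ∈ E, p ∈ Afam t) ∧ (∀ t ∈ F, p ∉ Afam t) := by
  classical
  set T : Finset ℝ := E ∪ F with hT
  set qq : ℝ → ℝ → ℚ := fun a b =>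
    if h : a < b then Classical.choose (exists_rat_btwn h) else 0 with hqq
  have hqq1 : ∀ a b : ℝ, a < b → a < (qq a b : ℝ) ∧ ((qq a b : ℝ)) < b := by
    intro a b h
    simp only [hqq, dif_pos h]
    exact Classical.choose_spec (exists_rat_btwn h)
  set s : Finset ℚ := (T ×ˢ T).image (fun x => qq x.1 x.2) with hs
  -- the traces of distinct elements of T on s are distinct
  have hinj : ∀ a ∈ T, ∀ b ∈ T, a < b → trc s a ≠ trc s b := by
    intro a ha b hb hab
    have hmem : qq a b ∈ s := by
      have hpair : (a, b) ∈ T ×ˢ T := Finset.mem_product.2 ⟨ha, hb⟩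
      rw [hs]
      exact Finset.mem_image_of_mem _ hpair
    obtain ⟨h1, h2⟩ := hqq1 a b hab
    intro hEq
    have hb' : qq a b ∈ trc s b := Finset.mem_filter.2 ⟨hmem, h2⟩
    rw [← hEq] at hb'
    exact absurd (Finset.mem_filter.1 hb').2 (not_lt.2 h1.le)
  have hinj' : ∀ a ∈ T, ∀ b ∈ T, a ≠ b → trc s a ≠ trc s b := by
    intro a ha b hb hne
    rcases lt_or_gt_of_ne hne with h | h
    · exact hinj a ha b hb h
    · exact fun hEq => hinj b hb a ha h hEq.symm
  refine ⟨((s, E.image (trc s)), k), rfl, ?_, ?_⟩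
  · intro t ht
    exact Finset.mem_image_of_mem _ ht
  · intro t ht hmem
    obtain ⟨t', ht', hEq⟩ := Finset.mem_image.1 hmem
    have hne : t' ≠ t := by
      rintro rfl
      exact (Finset.disjoint_left.1 hEF) ht' ht
    exact hinj' t' (Finset.mem_union_left _ ht') t (Finset.mem_union_right _ ht) hne hEq

variable (e : ℕ ≃ Iot)

open scoped Classical in
/-- For `S : Set ℝ`, keep `Afam t` for `t ∈ S` and its complement otherwise,
pulled back to `ℕ`. -/
def Bset (S : Set ℝ) (t : ℝ) : Set ℕ :=
  if t ∈ S then e ⁻¹' Afam t else (e ⁻¹' Afam t)ᶜ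

lemma inter_infinite (S : Set ℝ) (u0 : Finset ℝ) :
    (⋂ t ∈ u0, Bset e S t).Infinite := by
  classical
  set E : Finset ℝ := u0.filter (· ∈ S) with hE
  set F : Finset ℝ := u0.filter (· ∉ S) with hF
  have hd : Disjoint E F := by
    rw [Finset.disjoint_left]
    intro a haE haF
    exact (Finset.mem_filter.1 haF).2 (Finset.mem_filter.1 haE).2
  choose p hp2 hpE hpF using fun k => key E F hd k
  refine Set.infinite_of_injective_forall_mem (f := fun k => e.symm (p k)) ?_ ?_
  · intro k1 k2 h
    have : p k1 = p k2 := e.symm.injective h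
    rw [← hp2 k1, ← hp2 k2, this]
  · intro k
    apply Set.mem_iInter₂.2
    intro t ht
    by_cases hts : t ∈ S
    · have : p k ∈ Afam t := hpE k t (Finset.mem_filter.2 ⟨ht, hts⟩)
      simp only [Bset, if_pos hts, Set.mem_preimage, Equiv.apply_symm_apply]
      exact this
    · have : p k ∉ Afam t := hpF k t (Finset.mem_filter.2 ⟨ht, hts⟩)
      simp only [Bset, if_neg hts, Set.mem_compl_iff, Set.mem_preimage,
        Equiv.apply_symm_apply]
      exact this

lemma exists_ultra (S : Set ℝ) :
    ∃ u : Ultrafilter ℕ, (↑u : Filter ℕ) ≤ atTop ∧ ∀ t : ℝ, Bset e S t ∈ u := by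
  classical
  have hKeq : {u : Ultrafilter ℕ | (↑u : Filter ℕ) ≤ atTop}
      = ⋂ n : ℕ, {u : Ultrafilter ℕ | Set.Ici n ∈ u} := by
    ext u
    simp only [Set.mem_setOf_eq, Set.mem_iInter]
    constructor
    · intro h n
      exact h (mem_atTop n)
    · intro h
      intro v hv
      obtain ⟨a, ha⟩ := mem_atTop_sets.1 hv
      exact Filter.mem_of_superset (h a) ha
  have hK : IsClosed {u : Ultrafilter ℕ | (↑u : Filter ℕ) ≤ atTop} := by
    rw [hKeq]
    exact isClosed_iInter fun n => ultrafilter_isClosed_basic _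
  have hfip : ∀ u0 : Finset ℝ,
      ({u : Ultrafilter ℕ | (↑u : Filter ℕ) ≤ atTop}
        ∩ ⋂ t ∈ u0, {u : Ultrafilter ℕ | Bset e S t ∈ u}).Nonempty := by
    intro u0
    have hM : (⋂ t ∈ u0, Bset e S t).Infinite := inter_infinite e S u0
    have hne : (Filter.atTop (α := ℕ) ⊓ Filter.principal (⋂ t ∈ u0, Bset e S t)).NeBot := by
      rw [← Nat.cofinite_eq_atTop]
      rw [Filter.inf_principal_neBot_iff]
      intro U hU
      have : ((⋂ t ∈ u0, Bset e S t) \ Uᶜ).Nonempty :=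
        (hM.diff (Filter.mem_cofinite.1 hU)).nonempty
      obtain ⟨x, hx1, hx2⟩ := this
      exact ⟨x, not_not.1 hx2, hx1⟩
    obtain ⟨u, hu⟩ := Ultrafilter.exists_le
      (Filter.atTop (α := ℕ) ⊓ Filter.principal (⋂ t ∈ u0, Bset e S t))
    refine ⟨u, le_trans hu inf_le_left, ?_⟩
    apply Set.mem_iInter₂.2
    intro t ht
    have hMem : (⋂ t ∈ u0, Bset e S t) ∈ u :=
      hu (Filter.mem_inf_of_right (Filter.mem_principal_self _))
    exact Filter.mem_of_superset hMem (Set.biInter_subset_of_mem ht)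
  have := IsCompact.inter_iInter_nonempty (hK.isCompact)
    (fun t : ℝ => {u : Ultrafilter ℕ | Bset e S t ∈ u})
    (fun t => ultrafilter_isClosed_basic _) hfip
  obtain ⟨u, hu1, hu2⟩ := this
  exact ⟨u, hu1, fun t => Set.mem_iInter.1 hu2 t⟩

end

end Stmt15Aux

theorem stmt_15 {X : Type*} [TopologicalSpace X] [CompactSpace X] [T2Space X]
    (f : ℕ → C(X, ℝ)) (hf : ∀ n x, f n x ∈ Set.Icc (0 : ℝ) 1)
    (r s : ℝ) (hrs : r < s)
    (hIP : ∀ E F : Finset ℕ, Disjoint E F →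
      (⋂ n ∈ E, {x : X | f n x ≤ r}) ∩ (⋂ n ∈ F, {x : X | s ≤ f n x}) ≠ ∅) :
    (2 : Cardinal) ^ ((2 : Cardinal) ^ Cardinal.aleph0) ≤
      Cardinal.mk {g : X → ℝ //
        g ∈ closure (Set.range fun n => ((f n : X → ℝ))) ∧
        MapClusterPt g atTop (fun n => ((f n : X → ℝ)))} := by
  classical
  letI : Denumerable Stmt15Aux.Iot := Denumerable.ofEncodableOfInfinite _
  let e : ℕ ≃ Stmt15Aux.Iot := (Denumerable.eqv _).symm
  set fn : ℕ → X → ℝ := fun n => ((f n : X → ℝ)) with hfn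
  -- nonemptiness of the sets D(I)
  have hD : ∀ I : Set ℕ, ∃ x : X, (∀ n ∈ I, f n x ≤ r) ∧ (∀ n ∉ I, s ≤ f n x) := by
    intro I
    have hcl : ∀ n : ℕ, IsClosed (if n ∈ I then {x : X | f n x ≤ r} else {x : X | s ≤ f n x}) := by
      intro n
      split
      · exact isClosed_le (f n).continuous continuous_const
      · exact isClosed_le continuous_const (f n).continuous
    have hfip : ∀ u0 : Finset ℕ,
        (Set.univ ∩ ⋂ n ∈ u0, (if n ∈ I then {x : X | f n x ≤ r} else {x : X | s ≤ f n x})).Nonempty := by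
      intro u0
      rw [Set.univ_inter]
      have hd : Disjoint (u0.filter (· ∈ I)) (u0.filter (· ∉ I)) := by
        rw [Finset.disjoint_left]
        intro a haE haF
        exact (Finset.mem_filter.1 haF).2 (Finset.mem_filter.1 haE).2
      have := hIP (u0.filter (· ∈ I)) (u0.filter (· ∉ I)) hd
      obtain ⟨x, hx⟩ := Set.nonempty_iff_ne_empty.2 this
      obtain ⟨hx1, hx2⟩ := hx
      refine ⟨x, Set.mem_iInter₂.2 fun n hn => ?_⟩
      by_cases hnI : n ∈ I
      · rw [if_pos hnI]
        exact Set.mem_iInter₂.1 hx1 n (Finset.mem_filter.2 ⟨hn, hnI⟩)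
      · rw [if_neg hnI]
        exact Set.mem_iInter₂.1 hx2 n (Finset.mem_filter.2 ⟨hn, hnI⟩)
    obtain ⟨x, -, hx⟩ := IsCompact.inter_iInter_nonempty (isCompact_univ (X := X))
      (fun n => if n ∈ I then {x : X | f n x ≤ r} else {x : X | s ≤ f n x}) hcl hfip
    refine ⟨x, fun n hn => ?_, fun n hn => ?_⟩
    · have := Set.mem_iInter.1 hx n
      rwa [if_pos hn] at this
    · have := Set.mem_iInter.1 hx n
      rwa [if_neg hn] at this
  -- ultrafilter limits
  have hglim : ∀ (u : Ultrafilter ℕ) (x : X),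
      ∃ c : ℝ, Tendsto (fun n => f n x) (↑u) (𝓝 c) := by
    intro u x
    have hle : (u.map fun n => f n x : Filter ℝ) ≤ Filter.principal (Set.Icc (0 : ℝ) 1) := by
      rw [Filter.le_principal_iff]
      exact Filter.mem_map.2 (Filter.univ_mem' fun n => hf n x)
    obtain ⟨c, -, hc⟩ := (isCompact_Icc (a := (0 : ℝ)) (b := 1)).ultrafilter_le_nhds
      (u.map fun n => f n x) hle
    exact ⟨c, hc⟩
  choose g hg using hglim
  have htend : ∀ u : Ultrafilter ℕ, Tendsto fn (↑u) (𝓝 (g u)) := fun u =>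
    tendsto_pi_nhds.2 (hg u)
  have hclosure : ∀ u : Ultrafilter ℕ, g u ∈ closure (Set.range fn) := by
    intro u
    apply mem_closure_iff_clusterPt.2
    have h1 : (↑u : Filter ℕ).map fn ≤ 𝓝 (g u) := htend u
    have h2 : (↑u : Filter ℕ).map fn ≤ Filter.principal (Set.range fn) := by
      rw [Filter.le_principal_iff]
      exact Filter.mem_map.2 (Filter.univ_mem' fun n => Set.mem_range_self n)
    exact Filter.neBot_of_le (le_inf h1 h2)
  have hcluster : ∀ u : Ultrafilter ℕ, (↑u : Filter ℕ) ≤ atTop →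
      MapClusterPt (g u) atTop fn := by
    intro u hu
    have h1 : (↑u : Filter ℕ).map fn ≤ 𝓝 (g u) := htend u
    have h2 : (↑u : Filter ℕ).map fn ≤ Filter.map fn atTop := Filter.map_mono hu
    exact Filter.neBot_of_le (le_inf h1 h2)
  -- the injection
  set U : Set ℝ → Ultrafilter ℕ := fun S => (Stmt15Aux.exists_ultra e S).choose with hUdef
  have hU : ∀ S : Set ℝ, (↑(U S) : Filter ℕ) ≤ atTop ∧ ∀ t : ℝ, Stmt15Aux.Bset e S t ∈ U S :=
    fun S => (Stmt15Aux.exists_ultra e S).choose_spec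
  have main : ∀ S S' : Set ℝ, g (U S) = g (U S') → ∀ t, t ∈ S → t ∈ S' := by
    intro S S' hgeq t htS
    by_contra htS'
    have h1 : e ⁻¹' Stmt15Aux.Afam t ∈ U S := by
      have := (hU S).2 t
      rwa [Stmt15Aux.Bset, if_pos htS] at this
    have h2 : (e ⁻¹' Stmt15Aux.Afam t)ᶜ ∈ U S' := by
      have := (hU S').2 t
      rwa [Stmt15Aux.Bset, if_neg htS'] at this
    obtain ⟨x, hx1, hx2⟩ := hD (e ⁻¹' Stmt15Aux.Afam t)
    have hle : g (U S) x ≤ r :=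
      le_of_tendsto (hg (U S) x) (Filter.mem_of_superset h1 fun n hn => hx1 n hn)
    have hge : s ≤ g (U S') x :=
      ge_of_tendsto (hg (U S') x) (Filter.mem_of_superset h2 fun n hn => hx2 n hn)
    rw [hgeq] at hle
    linarith
  set Φ : Set ℝ → {g : X → ℝ // g ∈ closure (Set.range fn) ∧ MapClusterPt g atTop fn} :=
    fun S => ⟨g (U S), hclosure (U S), hcluster (U S) (hU S).1⟩ with hΦ
  have hΦinj : Function.Injective Φ := by
    intro S S' h
    have hgeq : g (U S) = g (U S') := congrArg Subtype.val h
    ext t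
    exact ⟨main S S' hgeq t, main S' S hgeq.symm t⟩
  have hcomp : Function.Injective (Φ ∘ (Equiv.Set.congr (Equiv.ulift (α := ℝ)))) :=
    hΦinj.comp (Equiv.injective _)
  have hle := Cardinal.mk_le_of_injective hcomp
  calc (2 : Cardinal) ^ ((2 : Cardinal) ^ Cardinal.aleph0)
      = (2 : Cardinal) ^ (Cardinal.continuum) := by rw [Cardinal.two_power_aleph0]
    _ = Cardinal.mk (Set (ULift ℝ)) := by
        rw [Cardinal.mk_set, Cardinal.mk_uLift, Cardinal.mk_real, Cardinal.lift_continuum]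
    _ ≤ _ := hle
end
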